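/- arXiv:2009.04128 — 5 statements merged into one kernel-verified Lean document; each statement's English description precedes it below -/
import Mathlib

section
/- Let p ≥ 1. There is a constant C > 0 depending only on p such that the following holds. Let Ω ⊂ ℝ^d be a Borel set, (Ω_i)_{i∈ℕ} a Borel partition of Ω, and μ, λ finite positive measures on Ω with λ(Ω) > 0 and λ(Ω_i) > 0 for all i with μ(Ω_i) > 0. Then for every ε ∈ (0,1), W_p^p(μ, (μ(Ω)/λ(Ω)) λ) ≤ (1+ε) ∑_i W_p^p(μ restricted to Ω_i, (μ(Ω_i)/λ(Ω_i)) λ restricted to Ω_i) + (C/ε^{p-1}) W_p^p(∑_i (μ(Ω_i)/λ(Ω_i)) χ_{Ω_i} λ, (μ(Ω)/λ(Ω)) λ). -/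
/-!
The cost of order `p` satisfies the approximate triangle inequality
`W(μ, ρ) ≤ (1 + ε) W(μ, ν) + C ε^(1-p) W(ν, ρ)`: glue couplings of `(μ, ν)` and `(ν, ρ)` along
`ν` by disintegration and integrate the pointwise bound
`(a + b)^p ≤ (1 + ε) a^p + C ε^(1-p) b^p`, which is the convexity of `x ↦ x^p` with weights
`1 - ε/(2p)` and `ε/(2p)`. Take `ν = ∑ᵢ (μΩᵢ/λΩᵢ) λ|Ωᵢ`: then `W(μ, ν)` is at most the sum of the
costs on the pieces, since couplings of the pieces add up to a coupling of `μ = ∑ᵢ μ|Ωᵢ` with `ν`.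
-/

open MeasureTheory ENNReal

/-- Transportation cost of order `p` (see the paper): infimum over couplings. -/
noncomputable def Wcost {X : Type*} [MeasurableSpace X] [PseudoMetricSpace X]
    (p : ℝ) (μ ν : Measure X) : ℝ≥0∞ :=
  sInf { c | ∃ π : Measure (X × X), π.map Prod.fst = μ ∧ π.map Prod.snd = ν ∧
      c = ∫⁻ z, ENNReal.ofReal (dist z.1 z.2 ^ p) ∂π }

open ProbabilityTheory

lemma Real.add_rpow_le_one_add_mul_rpow_add {p ε a b : ℝ} (hp : 1 ≤ p) (hε : 0 < ε) (hε1 : ε ≤ 1)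
    (ha : 0 ≤ a) (hb : 0 ≤ b) :
    (a + b) ^ p ≤ (1 + ε) * a ^ p + (2 * p) ^ (p - 1) / ε ^ (p - 1) * b ^ p := by
  set t := ε / (2 * p) with ht
  have hp0 : 0 < p := by linarith
  have ht0 : 0 < t := by positivity
  have hpt : p * t = ε / 2 := by rw [ht]; field_simp
  have ht1 : t < 1 := by nlinarith
  have hconv := (convexOn_rpow hp).2 (Set.mem_Ici.2 (div_nonneg ha (sub_pos.2 ht1).le))
    (Set.mem_Ici.2 (div_nonneg hb ht0.le)) (sub_pos.2 ht1).le ht0.le (sub_add_cancel 1 t)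
  have hweight : ∀ {w x : ℝ}, 0 < w → 0 ≤ x → w * (x / w) ^ p = x ^ p / w ^ (p - 1) := by
    intro w x hw hx
    rw [Real.div_rpow hx hw.le, Real.rpow_sub_one hw.ne']
    field_simp
  simp only [smul_eq_mul, mul_div_cancel₀ _ (sub_pos.2 ht1).ne', mul_div_cancel₀ _ ht0.ne',
    hweight (sub_pos.2 ht1) ha, hweight ht0 hb] at hconv
  -- Bernoulli: `(1 - t) ^ (p - 1) ≥ (1 - t) ^ p ≥ 1 - p t = 1 - ε / 2`, and `(1 + ε)(1 - ε/2) ≥ 1`.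
  have hfirst : 1 / (1 - t) ^ (p - 1) ≤ 1 + ε := by
    have hbern : 1 - ε / 2 ≤ (1 - t) ^ (p - 1) := calc
      1 - ε / 2 = 1 + p * (-t) := by linarith
      _ ≤ (1 + -t) ^ p := one_add_mul_self_le_rpow_one_add (by linarith) hp
      _ ≤ (1 - t) ^ (p - 1) := by
        rw [← sub_eq_add_neg]
        exact Real.rpow_le_rpow_of_exponent_ge (by linarith) (by linarith) (by linarith)
    rw [div_le_iff₀ (by linarith)]
    nlinarith
  have hsecond : 1 / t ^ (p - 1) = (2 * p) ^ (p - 1) / ε ^ (p - 1) := by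
    rw [ht, Real.div_rpow hε.le (by positivity), one_div_div]
  calc (a + b) ^ p ≤ a ^ p / (1 - t) ^ (p - 1) + b ^ p / t ^ (p - 1) := hconv
    _ = 1 / (1 - t) ^ (p - 1) * a ^ p + 1 / t ^ (p - 1) * b ^ p := by ring
    _ ≤ (1 + ε) * a ^ p + (2 * p) ^ (p - 1) / ε ^ (p - 1) * b ^ p := by
      rw [hsecond]; gcongr

lemma MeasureTheory.Measure.exists_gluing
    {X Y Z : Type*} [MeasurableSpace X] [MeasurableSpace Y] [MeasurableSpace Z]
    [StandardBorelSpace X] [Nonempty X] [StandardBorelSpace Z] [Nonempty Z]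
    (π₁ : Measure (X × Y)) (π₂ : Measure (Y × Z)) [IsFiniteMeasure π₁] [IsFiniteMeasure π₂]
    (h : π₁.snd = π₂.fst) :
    ∃ τ : Measure (X × Y × Z), τ.map (fun w => (w.1, w.2.1)) = π₁ ∧ τ.map Prod.snd = π₂ := by
  have hfst : (π₁.map Prod.swap).fst = π₂.fst := by rw [Measure.fst_map_swap, h]
  set τ := π₂.fst ⊗ₘ ((π₁.map Prod.swap).condKernel ×ₖ π₂.condKernel)
  have h₁ : τ.map (Prod.map id Prod.fst) = π₁.map Prod.swap := by
    rw [← Measure.compProd_map measurable_fst, ← Kernel.fst_eq, Kernel.fst_prod, ← hfst,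
      Measure.disintegrate]
  have h₂ : τ.map (Prod.map id Prod.snd) = π₂ := by
    rw [← Measure.compProd_map measurable_snd, ← Kernel.snd_eq, Kernel.snd_prod,
      Measure.disintegrate]
  refine ⟨τ.map fun w => (w.2.1, w.1, w.2.2), ?_, ?_⟩
  · change (τ.map _).map _ = _
    rw [Measure.map_map (by fun_prop) (by fun_prop)]
    change τ.map (Prod.swap ∘ Prod.map id Prod.fst) = π₁
    rw [← Measure.map_map (by fun_prop) (by fun_prop), h₁,
      Measure.map_map (by fun_prop) (by fun_prop), Prod.swap_swap_eq, Measure.map_id]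
  · rw [Measure.map_map (by fun_prop) (by fun_prop), ← h₂]
    rfl

section Wcost

variable {X : Type*} [MeasurableSpace X] [PseudoMetricSpace X] {p : ℝ}

lemma Wcost_eq_iInf (μ ν : Measure X) :
    Wcost p μ ν = ⨅ (π : Measure (X × X)) (_ : π.map Prod.fst = μ ∧ π.map Prod.snd = ν),
      ∫⁻ z, ENNReal.ofReal (dist z.1 z.2 ^ p) ∂π := by
  refine le_antisymm (le_iInf₂ fun π hπ => sInf_le ⟨π, hπ.1, hπ.2, rfl⟩) ?_
  exact le_sInf fun _ ⟨π, h₁, h₂, hc⟩ => hc ▸ iInf₂_le π ⟨h₁, h₂⟩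

lemma Wcost_le_lintegral {μ ν : Measure X} (π : Measure (X × X))
    (h₁ : π.map Prod.fst = μ) (h₂ : π.map Prod.snd = ν) :
    Wcost p μ ν ≤ ∫⁻ z, ENNReal.ofReal (dist z.1 z.2 ^ p) ∂π :=
  sInf_le ⟨π, h₁, h₂, rfl⟩

lemma exists_coupling_lintegral_lt {μ ν : Measure X} (h : Wcost p μ ν ≠ ∞) {δ : ℝ≥0∞}
    (hδ : δ ≠ 0) :
    ∃ π : Measure (X × X), π.map Prod.fst = μ ∧ π.map Prod.snd = ν ∧
      ∫⁻ z, ENNReal.ofReal (dist z.1 z.2 ^ p) ∂π < Wcost p μ ν + δ := by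
  obtain ⟨_, ⟨π, h₁, h₂, rfl⟩, hlt⟩ := sInf_lt_iff.1 (ENNReal.lt_add_right h hδ)
  exact ⟨π, h₁, h₂, hlt⟩

lemma Wcost_sum_le_tsum (μ ν : ℕ → Measure X) :
    Wcost p (Measure.sum μ) (Measure.sum ν) ≤ ∑' i, Wcost p (μ i) (ν i) := by
  by_cases htop : ∑' i, Wcost p (μ i) (ν i) = ∞
  · exact htop ▸ le_top
  refine ENNReal.le_of_forall_pos_le_add fun δ hδ _ => ?_
  obtain ⟨η, hη, hηsum⟩ := ENNReal.exists_pos_sum_of_countable (coe_ne_zero.2 hδ.ne') ℕ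
  choose π h₁ h₂ hπ using fun i => exists_coupling_lintegral_lt
    (ne_top_of_le_ne_top htop (ENNReal.le_tsum i)) (coe_ne_zero.2 (hη i).ne')
  have hfst : (Measure.sum π).map Prod.fst = Measure.sum μ := by
    simp only [Measure.map_sum measurable_fst.aemeasurable, h₁]
  have hsnd : (Measure.sum π).map Prod.snd = Measure.sum ν := by
    simp only [Measure.map_sum measurable_snd.aemeasurable, h₂]
  calc Wcost p (Measure.sum μ) (Measure.sum ν)
      ≤ ∑' i, ∫⁻ z, ENNReal.ofReal (dist z.1 z.2 ^ p) ∂(π i) := by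
        rw [← lintegral_sum_measure]; exact Wcost_le_lintegral _ hfst hsnd
    _ ≤ ∑' i, (Wcost p (μ i) (ν i) + η i) := ENNReal.tsum_le_tsum fun i => (hπ i).le
    _ ≤ ∑' i, Wcost p (μ i) (ν i) + δ := by
        rw [ENNReal.tsum_add]; gcongr

lemma Wcost_le_mul_add_mul [OpensMeasurableSpace X] [SecondCountableTopology X]
    [StandardBorelSpace X] [Nonempty X] {A B : ℝ} (hA : 0 < A) (hB : 0 < B)
    (hdist : ∀ x y z : X, dist x z ^ p ≤ A * dist x y ^ p + B * dist y z ^ p)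
    (μ ν ρ : Measure X) [IsFiniteMeasure μ] [IsFiniteMeasure ν] :
    Wcost p μ ρ ≤ ENNReal.ofReal A * Wcost p μ ν + ENNReal.ofReal B * Wcost p ν ρ := by
  rw [Wcost_eq_iInf μ ν, Wcost_eq_iInf ν ρ]
  simp only [ENNReal.mul_iInf_of_ne (ofReal_pos.2 hA).ne' ofReal_ne_top,
    ENNReal.mul_iInf_of_ne (ofReal_pos.2 hB).ne' ofReal_ne_top, ENNReal.iInf_add,
    ENNReal.add_iInf]
  refine le_iInf₂ fun π₂ ⟨h₃, h₄⟩ => le_iInf₂ fun π₁ ⟨h₁, h₂⟩ => ?_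
  have : IsFiniteMeasure π₁ :=
    (Measure.isFiniteMeasure_map_iff measurable_fst.aemeasurable).1 (h₁ ▸ inferInstance)
  have : IsFiniteMeasure π₂ :=
    (Measure.isFiniteMeasure_map_iff measurable_fst.aemeasurable).1 (h₃ ▸ inferInstance)
  obtain ⟨τ, hτ₁, hτ₂⟩ := Measure.exists_gluing π₁ π₂ (by rw [Measure.snd, Measure.fst, h₂, h₃])
  have hcost : Measurable fun z : X × X => ENNReal.ofReal (dist z.1 z.2 ^ p) := by fun_prop
  have hfst : (τ.map fun w => (w.1, w.2.2)).map Prod.fst = μ := by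
    rw [← h₁, ← hτ₁, Measure.map_map (by fun_prop) (by fun_prop),
      Measure.map_map (by fun_prop) (by fun_prop)]
    rfl
  have hsnd : (τ.map fun w => (w.1, w.2.2)).map Prod.snd = ρ := by
    rw [← h₄, ← hτ₂, Measure.map_map (by fun_prop) (by fun_prop),
      Measure.map_map (by fun_prop) (by fun_prop)]
    rfl
  have hpoint (w : X × X × X) : ENNReal.ofReal (dist w.1 w.2.2 ^ p) ≤
      ENNReal.ofReal A * ENNReal.ofReal (dist w.1 w.2.1 ^ p)
        + ENNReal.ofReal B * ENNReal.ofReal (dist w.2.1 w.2.2 ^ p) := by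
    rw [← ENNReal.ofReal_mul hA.le, ← ENNReal.ofReal_mul hB.le,
      ← ENNReal.ofReal_add (by positivity) (by positivity)]
    exact ENNReal.ofReal_le_ofReal (hdist _ _ _)
  calc Wcost p μ ρ ≤ ∫⁻ z, ENNReal.ofReal (dist z.1 z.2 ^ p) ∂(τ.map fun w => (w.1, w.2.2)) :=
        Wcost_le_lintegral _ hfst hsnd
    _ = ∫⁻ w, ENNReal.ofReal (dist w.1 w.2.2 ^ p) ∂τ := lintegral_map hcost (by fun_prop)
    _ ≤ ∫⁻ w, (ENNReal.ofReal A * ENNReal.ofReal (dist w.1 w.2.1 ^ p)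
        + ENNReal.ofReal B * ENNReal.ofReal (dist w.2.1 w.2.2 ^ p)) ∂τ := lintegral_mono hpoint
    _ = ENNReal.ofReal A * ∫⁻ z, ENNReal.ofReal (dist z.1 z.2 ^ p) ∂π₁
        + ENNReal.ofReal B * ∫⁻ z, ENNReal.ofReal (dist z.1 z.2 ^ p) ∂π₂ := by
      rw [lintegral_add_left (by fun_prop), lintegral_const_mul _ (by fun_prop),
        lintegral_const_mul _ (by fun_prop), ← hτ₁, ← hτ₂, lintegral_map hcost (by fun_prop),
        lintegral_map hcost measurable_snd]

lemma Wcost_triangle_le (hp : 1 ≤ p) {ε : ℝ} (hε : 0 < ε) (hε1 : ε ≤ 1)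
    [OpensMeasurableSpace X] [SecondCountableTopology X] [StandardBorelSpace X] [Nonempty X]
    (μ ν ρ : Measure X) [IsFiniteMeasure μ] [IsFiniteMeasure ν] :
    Wcost p μ ρ ≤ ENNReal.ofReal (1 + ε) * Wcost p μ ν
      + ENNReal.ofReal ((2 * p) ^ (p - 1) / ε ^ (p - 1)) * Wcost p ν ρ :=
  Wcost_le_mul_add_mul (by linarith) (by positivity)
    (fun x y z => (Real.rpow_le_rpow dist_nonneg (dist_triangle x y z) (by linarith)).trans
      (Real.add_rpow_le_one_add_mul_rpow_add hp hε hε1 dist_nonneg dist_nonneg)) μ ν ρ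

end Wcost

lemma MeasureTheory.Measure.div_smul_restrict_apply_univ {X : Type*} [MeasurableSpace X]
    {μ ν : Measure X} [IsFiniteMeasure ν] {s : Set X} (h : 0 < μ s → 0 < ν s) :
    ((μ s / ν s) • ν.restrict s) Set.univ = μ s := by
  rw [Measure.smul_apply, smul_eq_mul, Measure.restrict_apply_univ]
  rcases eq_or_ne (ν s) 0 with hν | hν
  · have hμ : μ s = 0 := by
      by_contra hμ
      simpa [hν] using h (pos_iff_ne_zero.2 hμ)
    simp [hν, hμ]
  · exact ENNReal.div_mul_cancel hν (measure_ne_top ν s)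

/-- The main sub-additivity lemma (Lemma 3.1): for every `p ≥ 1` there is a
constant `C > 0` depending only on `p` such that for every Borel set `Ω ⊆ ℝ^d`,
every Borel partition `(Ω i)` of `Ω`, every finite measures `μ, λ` on `Ω` with
finite `p`-th moments, and every `ε ∈ (0,1)`,
`W_p^p(μ, (μΩ/λΩ)λ) ≤ (1+ε) ∑ᵢ W_p^p(μ|_{Ωᵢ}, (μΩᵢ/λΩᵢ)λ|_{Ωᵢ})
  + (C/ε^(p-1)) W_p^p(∑ᵢ (μΩᵢ/λΩᵢ)χ_{Ωᵢ}λ, (μΩ/λΩ)λ)`. -/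
theorem main_subadditivity_lemma (p : ℝ) (hp : 1 ≤ p) :
    ∃ C : ℝ, 0 < C ∧ ∀ (d : ℕ) (Ω : Set (EuclideanSpace ℝ (Fin d)))
      (Ωi : ℕ → Set (EuclideanSpace ℝ (Fin d)))
      (μ lam : Measure (EuclideanSpace ℝ (Fin d))),
      MeasurableSet Ω → (∀ i, MeasurableSet (Ωi i)) →
      Pairwise (Function.onFun Disjoint Ωi) → (⋃ i, Ωi i) = Ω →
      IsFiniteMeasure μ → IsFiniteMeasure lam →
      μ Ωᶜ = 0 → lam Ωᶜ = 0 → 0 < lam Ω →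
      (∀ i, 0 < μ (Ωi i) → 0 < lam (Ωi i)) →
      (∫⁻ x, ENNReal.ofReal (‖x‖ ^ p) ∂μ ≠ ∞) →
      (∫⁻ x, ENNReal.ofReal (‖x‖ ^ p) ∂lam ≠ ∞) →
      ∀ ε : ℝ, 0 < ε → ε < 1 →
      Wcost p μ ((μ Ω / lam Ω) • lam)
        ≤ ENNReal.ofReal (1 + ε) *
            (∑' i, Wcost p (μ.restrict (Ωi i))
              ((μ (Ωi i) / lam (Ωi i)) • lam.restrict (Ωi i)))
          + ENNReal.ofReal (C / ε ^ (p - 1)) *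
            Wcost p (Measure.sum fun i => (μ (Ωi i) / lam (Ωi i)) • lam.restrict (Ωi i))
              ((μ Ω / lam Ω) • lam) := by
  refine ⟨(2 * p) ^ (p - 1), by positivity, ?_⟩
  intro d Ω Ωi μ lam _ hΩi hdisj hUnion _ _ hμΩc _ _ hpos _ _ ε hε hε1
  set ν := Measure.sum fun i => (μ (Ωi i) / lam (Ωi i)) • lam.restrict (Ωi i)
  have hμ : (Measure.sum fun i => μ.restrict (Ωi i)) = μ := by
    rw [← Measure.restrict_iUnion hdisj hΩi, hUnion]
    exact Measure.restrict_eq_self_of_ae_mem (mem_ae_iff.2 (by simpa using hμΩc))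
  have : IsFiniteMeasure ν := ⟨by
    simp only [ν, Measure.sum_apply _ MeasurableSet.univ,
      Measure.div_smul_restrict_apply_univ (hpos _), ← measure_iUnion hdisj hΩi]
    exact measure_lt_top μ _⟩
  have hsum := Wcost_sum_le_tsum (p := p) (fun i => μ.restrict (Ωi i))
    (fun i => (μ (Ωi i) / lam (Ωi i)) • lam.restrict (Ωi i))
  rw [hμ] at hsum
  calc Wcost p μ ((μ Ω / lam Ω) • lam)
      ≤ ENNReal.ofReal (1 + ε) * Wcost p μ ν
        + ENNReal.ofReal ((2 * p) ^ (p - 1) / ε ^ (p - 1)) * Wcost p ν ((μ Ω / lam Ω) • lam) :=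
      Wcost_triangle_le hp hε hε1.le μ ν _
    _ ≤ _ := by gcongr
end

section
/- Let p ≥ 1 and let Ω ⊂ ℝ^d be a Borel set. For all finite positive measures μ, λ on Ω with μ(Ω) = λ(Ω) > 0 and finite p-th moments, W_p(μ, λ) ≤ 2^{-1/p}( W_p(μ, λ) + W_p(μ + λ, 2λ) ); consequently W_p(μ, λ) ≤ (2^{1/p} / (2^{1/p} - 1)) W_p(μ + λ, 2λ). -/
/-!
Doubling both measures multiplies `W_p` by `2^{1/p}`. On the other hand, the triangle inequality
through `μ + λ`, together with `W_p^p(μ + μ, μ + λ) ≤ W_p^p(μ, μ) + W_p^p(μ, λ) = W_p^p(μ, λ)`,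
bounds `W_p(2μ, 2λ)` by `W_p(μ, λ) + W_p(μ + λ, 2λ)`. Since `W_p(μ, λ)` is finite (compare with the
normalized product coupling), it can be absorbed into the left-hand side. The triangle inequality
for `W_p` comes from gluing two couplings along their common marginal and Minkowski's inequality.
-/

open MeasureTheory ENNReal

/-- Wasserstein distance of order `p`. -/
noncomputable def Wdist {X : Type*} [MeasurableSpace X] [PseudoMetricSpace X]
    (p : ℝ) (μ ν : Measure X) : ℝ≥0∞ := (Wcost p μ ν) ^ (1 / p)

open ProbabilityTheory

noncomputable def transportCost {X : Type*} [MeasurableSpace X] [PseudoMetricSpace X]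
    (p : ℝ) (π : Measure (X × X)) : ℝ≥0∞ :=
  ∫⁻ z, ENNReal.ofReal (dist z.1 z.2 ^ p) ∂π

theorem ENNReal.iInf_rpow {ι : Sort*} (f : ι → ℝ≥0∞) {r : ℝ} (hr : 0 < r) :
    (⨅ i, f i) ^ r = ⨅ i, f i ^ r :=
  (ENNReal.orderIsoRpow r hr).map_iInf f

section PseudoMetric

variable {X : Type*} [MeasurableSpace X] [PseudoMetricSpace X] {p : ℝ}

theorem Wcost_eq_iInf_s5 (μ ν : Measure X) :
    Wcost p μ ν = ⨅ (π : Measure (X × X)) (_ : π.fst = μ ∧ π.snd = ν), transportCost p π := by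
  refine le_antisymm (le_iInf₂ fun π hπ => sInf_le ⟨π, hπ.1, hπ.2, rfl⟩) (le_sInf ?_)
  rintro _ ⟨π, h₁, h₂, rfl⟩
  exact iInf₂_le π ⟨h₁, h₂⟩

theorem Wdist_eq_iInf (hp : 0 < p) (μ ν : Measure X) :
    Wdist p μ ν
      = ⨅ (π : Measure (X × X)) (_ : π.fst = μ ∧ π.snd = ν), transportCost p π ^ (1 / p) := by
  simp_rw [Wdist, Wcost_eq_iInf_s5, ENNReal.iInf_rpow _ (one_div_pos.2 hp)]

theorem Wcost_le_transportCost {μ ν : Measure X} {π : Measure (X × X)} (h₁ : π.fst = μ)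
    (h₂ : π.snd = ν) : Wcost p μ ν ≤ transportCost p π :=
  sInf_le ⟨π, h₁, h₂, rfl⟩

theorem Wcost_self (hp : 0 < p) (μ : Measure X) : Wcost p μ μ = 0 := by
  have h₁ : (μ.map fun x => (x, x)).fst = μ := by
    rw [Measure.fst_map_prodMk (Y := fun x => x) measurable_id, Measure.map_id']
  have h₂ : (μ.map fun x => (x, x)).snd = μ := by
    rw [Measure.snd_map_prodMk (X := fun x => x) measurable_id, Measure.map_id']
  refine nonpos_iff_eq_zero.1 <| (Wcost_le_transportCost h₁ h₂).trans ?_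
  refine (lintegral_map_le _ _).trans_eq ?_
  simp [Real.zero_rpow hp.ne']

theorem Wcost_add_le (μ₁ μ₂ ν₁ ν₂ : Measure X) :
    Wcost p (μ₁ + μ₂) (ν₁ + ν₂) ≤ Wcost p μ₁ ν₁ + Wcost p μ₂ ν₂ := by
  rw [Wcost_eq_iInf_s5 μ₁, Wcost_eq_iInf_s5 μ₂]
  refine ENNReal.le_iInf₂_add_iInf₂ fun π₁ h₁ π₂ h₂ => ?_
  refine (Wcost_le_transportCost (π := π₁ + π₂) ?_ ?_).trans_eq (lintegral_add_measure _ _ _)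
  · rw [Measure.fst_add, h₁.1, h₂.1]
  · rw [Measure.snd_add, h₁.2, h₂.2]

theorem mul_Wcost_le_Wcost_smul {c : ℝ≥0∞} (hc₀ : c ≠ 0) (hc : c ≠ ∞) (μ ν : Measure X) :
    c * Wcost p μ ν ≤ Wcost p (c • μ) (c • ν) := by
  rw [Wcost_eq_iInf_s5 (c • μ)]
  refine le_iInf₂ fun π hπ => ?_
  rw [ENNReal.mul_le_iff_le_inv hc₀ hc]
  have hcancel (ρ : Measure X) : c⁻¹ • c • ρ = ρ := by
    rw [smul_smul, ENNReal.inv_mul_cancel hc₀ hc, one_smul]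
  refine (Wcost_le_transportCost (π := c⁻¹ • π) ?_ ?_).trans_eq (lintegral_smul_measure _ _)
  · rw [Measure.fst, Measure.map_smul, ← Measure.fst, hπ.1, hcancel]
  · rw [Measure.snd, Measure.map_smul, ← Measure.snd, hπ.2, hcancel]

theorem rpow_mul_Wdist_le_Wdist_smul (hp : 0 ≤ p) {c : ℝ≥0∞} (hc₀ : c ≠ 0) (hc : c ≠ ∞)
    (μ ν : Measure X) : c ^ (1 / p) * Wdist p μ ν ≤ Wdist p (c • μ) (c • ν) := by
  rw [Wdist, ← ENNReal.mul_rpow_of_nonneg _ _ (by positivity)]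
  exact ENNReal.rpow_le_rpow (mul_Wcost_le_Wcost_smul hc₀ hc μ ν) (by positivity)

theorem Wdist_two_smul_add_le (hp : 0 < p) (μ ν : Measure X) :
    Wdist p ((2 : ℝ≥0∞) • μ) (μ + ν) ≤ Wdist p μ ν := by
  refine ENNReal.rpow_le_rpow ?_ (by positivity)
  calc Wcost p ((2 : ℝ≥0∞) • μ) (μ + ν) ≤ Wcost p μ μ + Wcost p μ ν := by
        rw [two_smul]; exact Wcost_add_le μ μ μ ν
    _ = Wcost p μ ν := by rw [Wcost_self hp, zero_add]

end PseudoMetric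

section Gluing

variable {X : Type*} [MeasurableSpace X] [StandardBorelSpace X] [Nonempty X]

/-- Gluing lemma: disintegrate both couplings along their common marginal and couple the two
conditional kernels independently. -/
theorem exists_measure_map_eq_map_eq {π₁ π₂ : Measure (X × X)} [IsFiniteMeasure π₁]
    [IsFiniteMeasure π₂] (h : π₁.snd = π₂.fst) :
    ∃ m : Measure (X × X × X),
      m.map (fun t => (t.1, t.2.1)) = π₁ ∧ m.map (fun t => (t.2.1, t.2.2)) = π₂ := by
  set ρ := π₁.map Prod.swap
  have hρ : ρ.fst = π₂.fst := by rw [← h, Measure.fst_map_swap]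
  set m₀ := π₂.fst ⊗ₘ (ρ.condKernel ×ₖ π₂.condKernel)
  have h₁ : m₀.map (Prod.map id Prod.fst) = ρ := by
    rw [← Measure.compProd_map measurable_fst, ← Kernel.fst_eq, Kernel.fst_prod, ← hρ,
      ρ.disintegrate]
  have h₂ : m₀.map (Prod.map id Prod.snd) = π₂ := by
    rw [← Measure.compProd_map measurable_snd, ← Kernel.snd_eq, Kernel.snd_prod,
      π₂.disintegrate]
  refine ⟨m₀.map fun t => (t.2.1, t.1, t.2.2), ?_, ?_⟩
  · rw [Measure.map_map (by fun_prop) (by fun_prop)]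
    calc m₀.map _ = (m₀.map (Prod.map id Prod.fst)).map Prod.swap := by
          rw [Measure.map_map (by fun_prop) (by fun_prop)]; rfl
      _ = π₁ := by rw [h₁, Measure.map_map measurable_swap measurable_swap]; simp
  · rw [Measure.map_map (by fun_prop) (by fun_prop), ← h₂]
    rfl

end Gluing

section Triangle

variable {X : Type*} [MeasurableSpace X] [PseudoMetricSpace X] [SecondCountableTopology X]
  [OpensMeasurableSpace X] {p : ℝ}

theorem transportCost_map {Y : Type*} [MeasurableSpace Y] {m : Measure Y} {f : Y → X × X}
    (hf : Measurable f) :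
    transportCost p (m.map f) = ∫⁻ t, ENNReal.ofReal (dist (f t).1 (f t).2 ^ p) ∂m :=
  lintegral_map (by fun_prop) hf

variable [StandardBorelSpace X] [Nonempty X]

theorem Wdist_le_transportCost_rpow_add (hp : 1 ≤ p) {μ κ ν : Measure X} [IsFiniteMeasure κ]
    {π₁ π₂ : Measure (X × X)} (h₁₁ : π₁.fst = μ) (h₁₂ : π₁.snd = κ) (h₂₁ : π₂.fst = κ)
    (h₂₂ : π₂.snd = ν) :
    Wdist p μ ν ≤ transportCost p π₁ ^ (1 / p) + transportCost p π₂ ^ (1 / p) := by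
  have hp₀ : 0 ≤ p := zero_le_one.trans hp
  have : IsFiniteMeasure π₁ := by
    have : IsFiniteMeasure (π₁.map Prod.snd) := by rw [← Measure.snd, h₁₂]; infer_instance
    exact Measure.isFiniteMeasure_of_map measurable_snd.aemeasurable
  have : IsFiniteMeasure π₂ := by
    have : IsFiniteMeasure (π₂.map Prod.fst) := by rw [← Measure.fst, h₂₁]; infer_instance
    exact Measure.isFiniteMeasure_of_map measurable_fst.aemeasurable
  obtain ⟨m, hm₁, hm₂⟩ := exists_measure_map_eq_map_eq (h₁₂.trans h₂₁.symm)
  have hfst : (m.map fun t => (t.1, t.2.2)).fst = μ := by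
    rw [← h₁₁, ← hm₁, Measure.fst_map_prodMk (by fun_prop), Measure.fst_map_prodMk (by fun_prop)]
  have hsnd : (m.map fun t => (t.1, t.2.2)).snd = ν := by
    rw [← h₂₂, ← hm₂, Measure.snd_map_prodMk (by fun_prop), Measure.snd_map_prodMk (by fun_prop)]
  set d₁ : X × X × X → ℝ≥0∞ := fun t => ENNReal.ofReal (dist t.1 t.2.1)
  set d₂ : X × X × X → ℝ≥0∞ := fun t => ENNReal.ofReal (dist t.2.1 t.2.2)
  have hd (t : X × X × X) : ENNReal.ofReal (dist t.1 t.2.2 ^ p) ≤ (d₁ t + d₂ t) ^ p := by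
    rw [← ENNReal.ofReal_rpow_of_nonneg dist_nonneg hp₀, ← ENNReal.ofReal_add dist_nonneg
      dist_nonneg]
    gcongr
    exact dist_triangle _ _ _
  have hcost₁ : ∫⁻ t, d₁ t ^ p ∂m = transportCost p π₁ := by
    simp only [d₁, ← hm₁, transportCost_map (by fun_prop : Measurable fun t : X × X × X =>
      (t.1, t.2.1)), ENNReal.ofReal_rpow_of_nonneg dist_nonneg hp₀]
  have hcost₂ : ∫⁻ t, d₂ t ^ p ∂m = transportCost p π₂ := by
    simp only [d₂, ← hm₂, transportCost_map (by fun_prop : Measurable fun t : X × X × X =>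
      (t.2.1, t.2.2)), ENNReal.ofReal_rpow_of_nonneg dist_nonneg hp₀]
  calc Wdist p μ ν ≤ transportCost p (m.map fun t => (t.1, t.2.2)) ^ (1 / p) :=
        ENNReal.rpow_le_rpow (Wcost_le_transportCost hfst hsnd) (by positivity)
    _ ≤ (∫⁻ t, (d₁ t + d₂ t) ^ p ∂m) ^ (1 / p) := by
        rw [transportCost_map (by fun_prop)]
        gcongr with t
        exact hd t
    _ ≤ (∫⁻ t, d₁ t ^ p ∂m) ^ (1 / p) + (∫⁻ t, d₂ t ^ p ∂m) ^ (1 / p) :=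
        ENNReal.lintegral_Lp_add_le (by fun_prop) (by fun_prop) hp
    _ = transportCost p π₁ ^ (1 / p) + transportCost p π₂ ^ (1 / p) := by rw [hcost₁, hcost₂]

theorem Wdist_triangle (hp : 1 ≤ p) (μ κ ν : Measure X) [IsFiniteMeasure κ] :
    Wdist p μ ν ≤ Wdist p μ κ + Wdist p κ ν := by
  rw [Wdist_eq_iInf (zero_lt_one.trans_le hp) μ κ, Wdist_eq_iInf (zero_lt_one.trans_le hp) κ ν]
  exact ENNReal.le_iInf₂_add_iInf₂ fun π₁ h₁ π₂ h₂ =>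
    Wdist_le_transportCost_rpow_add hp h₁.1 h₁.2 h₂.1 h₂.2

end Triangle

section Finiteness

theorem ofReal_dist_rpow_le {E : Type*} [SeminormedAddCommGroup E] {p : ℝ} (hp : 1 ≤ p)
    (x y : E) :
    ENNReal.ofReal (dist x y ^ p)
      ≤ 2 ^ (p - 1) * (ENNReal.ofReal (‖x‖ ^ p) + ENNReal.ofReal (‖y‖ ^ p)) := by
  have hp₀ : 0 ≤ p := zero_le_one.trans hp
  simp only [← ENNReal.ofReal_rpow_of_nonneg (norm_nonneg _) hp₀,
    ← ENNReal.ofReal_rpow_of_nonneg dist_nonneg hp₀]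
  calc ENNReal.ofReal (dist x y) ^ p ≤ (ENNReal.ofReal ‖x‖ + ENNReal.ofReal ‖y‖) ^ p := by
        rw [← ENNReal.ofReal_add (norm_nonneg _) (norm_nonneg _), dist_eq_norm]
        gcongr
        exact norm_sub_le x y
    _ ≤ _ := ENNReal.rpow_add_le_mul_rpow_add_rpow _ _ hp

variable {X : Type*} [MeasurableSpace X] [SeminormedAddCommGroup X] [SecondCountableTopology X]
  [OpensMeasurableSpace X] {p : ℝ}

/-- The independent coupling has finite cost. -/
theorem Wcost_ne_top (hp : 1 ≤ p) {μ ν : Measure X} [IsFiniteMeasure μ] [IsFiniteMeasure ν]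
    (hmass : μ Set.univ = ν Set.univ) (hν : ν Set.univ ≠ 0)
    (hμmom : ∫⁻ x, ENNReal.ofReal (‖x‖ ^ p) ∂μ ≠ ∞)
    (hνmom : ∫⁻ x, ENNReal.ofReal (‖x‖ ^ p) ∂ν ≠ ∞) :
    Wcost p μ ν ≠ ∞ := by
  set c := (ν Set.univ)⁻¹
  have hcancel (ρ : Measure X) : c • ν Set.univ • ρ = ρ := by
    rw [smul_smul, ENNReal.inv_mul_cancel hν (measure_ne_top ν _), one_smul]
  have hfst : (c • μ.prod ν).fst = μ := by
    rw [Measure.fst, Measure.map_smul, Measure.map_fst_prod, hcancel]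
  have hsnd : (c • μ.prod ν).snd = ν := by
    rw [Measure.snd, Measure.map_smul, Measure.map_snd_prod, hmass, hcancel]
  set f : X → ℝ≥0∞ := fun x => ENNReal.ofReal (‖x‖ ^ p)
  have hf : Measurable f := by fun_prop
  have hprod : transportCost p (μ.prod ν)
      ≤ 2 ^ (p - 1) * (ν Set.univ * ∫⁻ x, f x ∂μ + μ Set.univ * ∫⁻ x, f x ∂ν) := by
    calc transportCost p (μ.prod ν) ≤ ∫⁻ z, 2 ^ (p - 1) * (f z.1 + f z.2) ∂(μ.prod ν) :=
          lintegral_mono fun z => ofReal_dist_rpow_le hp z.1 z.2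
      _ = 2 ^ (p - 1) * (∫⁻ z, f z.1 ∂(μ.prod ν) + ∫⁻ z, f z.2 ∂(μ.prod ν)) := by
          rw [lintegral_const_mul _ (by fun_prop), lintegral_add_left (by fun_prop)]
      _ = _ := by
          rw [← lintegral_map hf measurable_fst, ← lintegral_map hf measurable_snd,
            Measure.map_fst_prod, Measure.map_snd_prod, lintegral_smul_measure,
            lintegral_smul_measure, smul_eq_mul, smul_eq_mul]
  refine ne_top_of_le_ne_top ?_ (Wcost_le_transportCost hfst hsnd)
  rw [transportCost, lintegral_smul_measure, smul_eq_mul]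
  refine ENNReal.mul_ne_top (ENNReal.inv_ne_top.2 hν) (ne_top_of_le_ne_top ?_ hprod)
  exact ENNReal.mul_ne_top (by simp) (ENNReal.add_ne_top.2
    ⟨ENNReal.mul_ne_top (measure_ne_top _ _) hμmom, ENNReal.mul_ne_top (measure_ne_top _ _) hνmom⟩)

end Finiteness

theorem two_rpow_mul_Wdist_le {X : Type*} [MeasurableSpace X] [PseudoMetricSpace X]
    [SecondCountableTopology X] [OpensMeasurableSpace X] [StandardBorelSpace X] [Nonempty X]
    {p : ℝ} (hp : 1 ≤ p) (μ ν : Measure X) [IsFiniteMeasure μ] [IsFiniteMeasure ν] :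
    (2 : ℝ≥0∞) ^ (1 / p) * Wdist p μ ν ≤ Wdist p μ ν + Wdist p (μ + ν) ((2 : ℝ≥0∞) • ν) :=
  calc (2 : ℝ≥0∞) ^ (1 / p) * Wdist p μ ν ≤ Wdist p ((2 : ℝ≥0∞) • μ) ((2 : ℝ≥0∞) • ν) :=
        rpow_mul_Wdist_le_Wdist_smul (zero_le_one.trans hp) two_ne_zero ofNat_ne_top μ ν
    _ ≤ Wdist p ((2 : ℝ≥0∞) • μ) (μ + ν) + Wdist p (μ + ν) ((2 : ℝ≥0∞) • ν) :=
        Wdist_triangle hp _ _ _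
    _ ≤ Wdist p μ ν + Wdist p (μ + ν) ((2 : ℝ≥0∞) • ν) := by
        gcongr
        exact Wdist_two_smul_add_le (zero_lt_one.trans_le hp) μ ν

theorem ENNReal.le_div_sub_one_mul_of_mul_le_add {a b c : ℝ≥0∞} (hc : 1 < c) (hc' : c ≠ ∞)
    (ha : a ≠ ∞) (h : c * a ≤ a + b) : a ≤ c / (c - 1) * b := by
  have hsub : (c - 1) * a ≤ b := by
    rw [← ENNReal.add_le_add_iff_right ha, ← add_one_mul, tsub_add_cancel_of_le hc.le, add_comm]
    exact h
  have hc₀ : c - 1 ≠ 0 := (tsub_pos_of_lt hc).ne'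
  have hc₁ : c - 1 ≠ ∞ := ENNReal.sub_ne_top hc'
  calc a ≤ (c - 1)⁻¹ * b := (ENNReal.mul_le_iff_le_inv hc₀ hc₁).1 hsub
    _ ≤ c / (c - 1) * b := by
        rw [div_eq_mul_inv]
        gcongr
        exact le_mul_of_one_le_left' hc.le

theorem Wdist_le_Wdist_add_self_general (d : ℕ) (p : ℝ) (hp : 1 ≤ p)
    (μ lam : Measure (EuclideanSpace ℝ (Fin d)))
    (hμfin : IsFiniteMeasure μ) (hlamfin : IsFiniteMeasure lam)
    (hmass : μ Set.univ = lam Set.univ) (hpos : 0 < μ Set.univ)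
    (hμmom : ∫⁻ x, ENNReal.ofReal (‖x‖ ^ p) ∂μ ≠ ∞)
    (hlammom : ∫⁻ x, ENNReal.ofReal (‖x‖ ^ p) ∂lam ≠ ∞) :
    Wdist p μ lam
        ≤ ENNReal.ofReal (2 ^ (-(1 / p) : ℝ)) * (Wdist p μ lam + Wdist p (μ + lam) ((2 : ℝ≥0∞) • lam))
      ∧ Wdist p μ lam
        ≤ ENNReal.ofReal ((2 : ℝ) ^ ((1 / p) : ℝ) / ((2 : ℝ) ^ ((1 / p) : ℝ) - 1)) *
            Wdist p (μ + lam) ((2 : ℝ≥0∞) • lam) := by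
  have hp₀ : 0 < 1 / p := one_div_pos.2 (zero_lt_one.trans_le hp)
  set c : ℝ≥0∞ := 2 ^ (1 / p)
  have hc : 1 < c := ENNReal.one_lt_rpow one_lt_two hp₀
  have hc' : c ≠ ∞ := ENNReal.rpow_ne_top_of_nonneg hp₀.le ofNat_ne_top
  have hreal : (1 : ℝ) < 2 ^ (1 / p) := Real.one_lt_rpow one_lt_two hp₀
  have hdouble := two_rpow_mul_Wdist_le hp μ lam
  have hW : Wdist p μ lam ≠ ∞ := ENNReal.rpow_ne_top_of_nonneg hp₀.le <|
    Wcost_ne_top hp hmass (hmass ▸ hpos.ne') hμmom hlammom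
  constructor
  · have hinv : ENNReal.ofReal (2 ^ (-(1 / p))) = c⁻¹ := by
      rw [← ENNReal.ofReal_rpow_of_pos two_pos, ENNReal.ofReal_ofNat, ENNReal.rpow_neg]
    rw [hinv, ← ENNReal.mul_le_iff_le_inv (zero_lt_one.trans hc).ne' hc']
    exact hdouble
  · have hconst : ENNReal.ofReal (2 ^ (1 / p) / (2 ^ (1 / p) - 1)) = c / (c - 1) := by
      rw [ENNReal.ofReal_div_of_pos (by linarith), ENNReal.ofReal_sub _ zero_le_one,
        ← ENNReal.ofReal_rpow_of_pos two_pos, ENNReal.ofReal_ofNat, ENNReal.ofReal_one]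
    rw [hconst]
    exact ENNReal.le_div_sub_one_mul_of_mul_le_add hc hc' hW hdouble

/-- For finite measures `μ, λ` on a Borel set `Ω ⊆ ℝ^d` of equal positive mass
and finite `p`-th moments, `W_p(μ,λ) ≤ 2^{-1/p} (W_p(μ,λ) + W_p(μ+λ, 2λ))`;
consequently `W_p(μ,λ) ≤ (2^{1/p}/(2^{1/p}-1)) W_p(μ+λ, 2λ)`. -/
theorem Wdist_le_Wdist_add_self (d : ℕ) (p : ℝ) (hp : 1 ≤ p)
    (Ω : Set (EuclideanSpace ℝ (Fin d))) (hΩ : MeasurableSet Ω)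
    (μ lam : Measure (EuclideanSpace ℝ (Fin d)))
    (hμfin : IsFiniteMeasure μ) (hlamfin : IsFiniteMeasure lam)
    (hμΩ : μ Ωᶜ = 0) (hlamΩ : lam Ωᶜ = 0)
    (hmass : μ Set.univ = lam Set.univ) (hpos : 0 < μ Set.univ)
    (hμmom : ∫⁻ x, ENNReal.ofReal (‖x‖ ^ p) ∂μ ≠ ∞)
    (hlammom : ∫⁻ x, ENNReal.ofReal (‖x‖ ^ p) ∂lam ≠ ∞) :
    Wdist p μ lam
        ≤ ENNReal.ofReal (2 ^ (-(1 / p) : ℝ)) * (Wdist p μ lam + Wdist p (μ + lam) ((2 : ℝ≥0∞) • lam))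
      ∧ Wdist p μ lam
        ≤ ENNReal.ofReal ((2 : ℝ) ^ ((1 / p) : ℝ) / ((2 : ℝ) ^ ((1 / p) : ℝ) - 1)) *
            Wdist p (μ + lam) ((2 : ℝ≥0∞) • lam) :=
  Wdist_le_Wdist_add_self_general d p hp μ lam hμfin hlamfin hmass hpos hμmom hlammom
end

section
/- Let p ≥ 1 and d ≥ 1, and suppose f : (0,∞) × ℕ → [0,∞) satisfies: (1) f(L, n) = L^p f(1, n) for all L > 0, n ∈ ℕ; (2) f(1, n) ≤ C₀ for all n and some constant C₀; (3) f(1, n) ≤ f(1, m) whenever m ≤ n. For L > 0 let N_L be a Poisson random variable with parameter L^d and set F(L) = E[f(L, N_L)]. Then limsup_{n→∞} n^{p/d} f(1, n) ≤ limsup_{L→∞} F(L) and liminf_{n→∞} n^{p/d} f(1, n) ≤ liminf_{L→∞} F(L). -/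
/-!
Since `f(1, ·)` is nonincreasing, `F(L) ≥ L^p f(1, n) P(N_L < n)` for every `n`. The Poisson
generating function `E[t^N] = e^{r(t-1)}` with `t = 1/c` gives the Chernoff bound
`P(N_L ≥ n) ≤ (c e^{1-c})^n`, which tends to `0` as soon as `L^d ≤ c n` with `c < 1`. Pairing `n`
with `L ≈ (c n)^{1/d}` (for the limsup) or `L` with `n = ⌈L^d / c⌉` (for the liminf) gives both
inequalities up to a power of `c`, which tends to `1` as `c → 1`.
-/

open MeasureTheory ProbabilityTheory Filter

open Real Finset Topology
open scoped ENNReal Nat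

section ENNReal

variable {α β : Type*} {la : Filter α} {lb : Filter β} {u : α → ℝ≥0∞} {v : β → ℝ≥0∞}

theorem ENNReal.limsup_le_limsup_of_forall_lt_one
    (h : ∀ a < 1, ∃ g : α → β, Tendsto g la lb ∧ ∀ᶠ x in la, a * u x ≤ v (g x)) :
    limsup u la ≤ limsup v lb := by
  refine ENNReal.le_of_forall_lt_one_mul_le fun a ha => ?_
  obtain ⟨g, hg, hle⟩ := h a ha
  calc a * limsup u la = limsup (fun x => a * u x) la :=
        (ENNReal.limsup_const_mul_of_ne_top (ha.trans ENNReal.one_lt_top).ne).symm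
    _ ≤ limsup (v ∘ g) la := limsup_le_limsup hle
    _ ≤ limsup v lb := hg.limsup_comp_le_limsup

theorem ENNReal.liminf_le_liminf_of_forall_lt_one
    (h : ∀ a < 1, ∃ g : β → α, Tendsto g lb la ∧ ∀ᶠ y in lb, a * u (g y) ≤ v y) :
    liminf u la ≤ liminf v lb := by
  refine ENNReal.le_of_forall_lt_one_mul_le fun a ha => ?_
  rcases eq_or_ne a 0 with rfl | ha0
  · simp
  obtain ⟨g, hg, hle⟩ := h a ha
  calc a * liminf u la ≤ a * liminf (u ∘ g) lb := by gcongr; exact hg.liminf_le_liminf_comp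
    _ = liminf (fun y => a * u (g y)) lb :=
        (ENNReal.liminf_const_mul_of_ne_zero_of_ne_top ha0 (ha.trans ENNReal.one_lt_top).ne).symm
    _ ≤ liminf v lb := liminf_le_liminf hle

theorem ENNReal.exists_lt_ofReal_rpow {a : ℝ≥0∞} (ha : a < 1) (q : ℝ) :
    ∃ c ∈ Set.Ioo (0 : ℝ) 1, a < ENNReal.ofReal (c ^ q) := by
  have hlim : Tendsto (fun c : ℝ => ENNReal.ofReal (c ^ q)) (𝓝[<] 1) (𝓝 1) := by
    have := (ENNReal.continuous_ofReal.tendsto _).comp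
      (Real.continuousAt_rpow_const 1 q (Or.inl one_ne_zero))
    simpa [Function.comp_def] using this.mono_left nhdsWithin_le_nhds
  exact ((hlim.eventually (lt_mem_nhds ha)).and (Ioo_mem_nhdsLT zero_lt_one)).exists.imp
    fun c hc => ⟨hc.2, hc.1⟩

theorem ENNReal.mul_ofReal_le_ofReal {a : ℝ≥0∞} {κ x y : ℝ} (ha : a ≤ ENNReal.ofReal κ)
    (hκ : 0 ≤ κ) (h : κ * x ≤ y) : a * ENNReal.ofReal x ≤ ENNReal.ofReal y :=
  calc a * ENNReal.ofReal x ≤ ENNReal.ofReal κ * ENNReal.ofReal x := by gcongr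
    _ = ENNReal.ofReal (κ * x) := (ENNReal.ofReal_mul hκ).symm
    _ ≤ ENNReal.ofReal y := ENNReal.ofReal_le_ofReal h

end ENNReal

theorem mul_sum_range_le_tsum_mul {w g : ℕ → ℝ} (hw : ∀ k, 0 ≤ w k) (hws : Summable w)
    (hg : ∀ k, 0 ≤ g k) (hanti : Antitone g) (n : ℕ) :
    g n * ∑ k ∈ range n, w k ≤ ∑' k, w k * g k := by
  have hs : Summable fun k => w k * g k :=
    (hws.mul_right (g 0)).of_nonneg_of_le (fun k => mul_nonneg (hw k) (hg k))
      fun k => mul_le_mul_of_nonneg_left (hanti (Nat.zero_le k)) (hw k)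
  calc g n * ∑ k ∈ range n, w k = ∑ k ∈ range n, w k * g n := by rw [mul_sum]; simp_rw [mul_comm]
    _ ≤ ∑ k ∈ range n, w k * g k :=
        sum_le_sum fun k hk => mul_le_mul_of_nonneg_left (hanti (mem_range.1 hk).le) (hw k)
    _ ≤ ∑' k, w k * g k := hs.sum_le_tsum _ fun k _ => mul_nonneg (hw k) (hg k)

theorem mul_exp_one_sub_lt_one {c : ℝ} (hc1 : c < 1) : c * exp (1 - c) < 1 := by
  have hc : c < exp (c - 1) := by linarith [add_one_lt_exp (x := c - 1) (by linarith)]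
  calc c * exp (1 - c) < exp (c - 1) * exp (1 - c) := by gcongr
    _ = 1 := by rw [← exp_add]; simp

noncomputable def poissonWeight (r : ℝ) (k : ℕ) : ℝ := exp (-r) * r ^ k / k !

theorem poissonWeight_nonneg {r : ℝ} (hr : 0 ≤ r) (k : ℕ) : 0 ≤ poissonWeight r k := by
  unfold poissonWeight; positivity

theorem hasSum_poissonWeight_mul_pow (r t : ℝ) :
    HasSum (fun k => poissonWeight r k * t ^ k) (exp (r * (t - 1))) := by
  have h := (NormedSpace.expSeries_div_hasSum_exp (r * t)).mul_left (exp (-r))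
  rw [← Real.exp_eq_exp_ℝ, ← Real.exp_add, show -r + r * t = r * (t - 1) by ring] at h
  refine (funext fun k => ?_ : (fun k => poissonWeight r k * t ^ k) = _) ▸ h
  rw [poissonWeight, mul_pow]
  ring

theorem hasSum_poissonWeight (r : ℝ) : HasSum (poissonWeight r) 1 := by
  simpa using hasSum_poissonWeight_mul_pow r 1

-- Chernoff: `P(N ≥ n) ≤ E[t^N] / t^n` for `t ≥ 1`.
theorem one_sub_le_sum_range_poissonWeight {r t : ℝ} (hr : 0 ≤ r) (ht : 1 ≤ t) (n : ℕ) :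
    1 - exp (r * (t - 1)) / t ^ n ≤ ∑ k ∈ range n, poissonWeight r k := by
  have hhead : HasSum (fun k => if k < n then poissonWeight r k else 0)
      (∑ k ∈ range n, poissonWeight r k) := by
    have h : HasSum (fun k => if k < n then poissonWeight r k else 0)
        (∑ k ∈ range n, if k < n then poissonWeight r k else 0) :=
      hasSum_sum_of_ne_finset_zero fun k hk => if_neg (by simpa using hk)
    rwa [sum_congr rfl fun k hk => if_pos (mem_range.1 hk)] at h
  have := hasSum_le (fun k => ?_) (hasSum_poissonWeight r)
    (hhead.add ((hasSum_poissonWeight_mul_pow r t).div_const (t ^ n)))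
  · linarith
  have hw := poissonWeight_nonneg hr k
  split_ifs with hk
  · have : 0 ≤ poissonWeight r k * t ^ k / t ^ n := by positivity
    linarith
  · rw [zero_add, le_div_iff₀ (by positivity)]
    exact mul_le_mul_of_nonneg_left (pow_le_pow_right₀ ht (not_lt.1 hk)) hw

theorem one_sub_pow_le_sum_range_poissonWeight {c r : ℝ} (hc0 : 0 < c) (hc1 : c < 1) (hr : 0 ≤ r)
    {n : ℕ} (hrn : r ≤ c * n) :
    1 - (c * exp (1 - c)) ^ n ≤ ∑ k ∈ range n, poissonWeight r k := by
  refine le_trans ?_ (one_sub_le_sum_range_poissonWeight hr (one_le_inv₀ hc0 |>.2 hc1.le) n)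
  have hexp : r * (c⁻¹ - 1) ≤ n * (1 - c) := by
    calc r * (c⁻¹ - 1) ≤ c * n * (c⁻¹ - 1) := by gcongr; linarith [one_lt_inv₀ hc0 |>.2 hc1]
      _ = n * (1 - c) := by field_simp
  have htail : exp (r * (c⁻¹ - 1)) / c⁻¹ ^ n ≤ (c * exp (1 - c)) ^ n :=
    calc exp (r * (c⁻¹ - 1)) / c⁻¹ ^ n ≤ exp (n * (1 - c)) * c ^ n := by
          rw [inv_pow, div_inv_eq_mul]; gcongr
      _ = (c * exp (1 - c)) ^ n := by rw [mul_pow, ← exp_nat_mul, mul_comm]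
  linarith

set_option linter.deprecated false in
theorem poissonPMF_toNNReal_toReal {r : ℝ} (hr : 0 ≤ r) (k : ℕ) :
    (poissonPMF r.toNNReal k).toReal = poissonWeight r k := by
  rw [← poissonPMFReal_ofReal_eq_poissonPMF, ENNReal.toReal_ofReal poissonPMFReal_nonneg,
    poissonPMFReal, Real.coe_toNNReal r hr, poissonWeight]

namespace DePoissonization

variable {d : ℕ} {p : ℝ} {h : ℕ → ℝ} {F : ℝ → ℝ}

theorem eventually_mul_rpow_mul_le (h0 : ∀ n, 0 ≤ h n) (hanti : Antitone h)
    (hF : ∀ L > 0, F L = L ^ p * ∑' k, poissonWeight (L ^ d) k * h k)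
    {c : ℝ} (hc0 : 0 < c) (hc1 : c < 1) :
    ∀ᶠ n : ℕ in atTop, ∀ L > 0, L ^ d ≤ c * n → c * (L ^ p * h n) ≤ F L := by
  have hρ : ∀ᶠ n : ℕ in atTop, (c * exp (1 - c)) ^ n ≤ 1 - c :=
    (tendsto_pow_atTop_nhds_zero_of_lt_one (by positivity) (mul_exp_one_sub_lt_one hc1)).eventually
      (eventually_le_nhds (by linarith))
  filter_upwards [hρ] with n hn L hL hLn
  have hmass := one_sub_pow_le_sum_range_poissonWeight hc0 hc1 (by positivity) hLn
  have hmean := mul_sum_range_le_tsum_mul (poissonWeight_nonneg (by positivity))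
    (hasSum_poissonWeight (L ^ d)).summable h0 hanti n
  rw [hF L hL]
  calc c * (L ^ p * h n) ≤ L ^ p * (h n * ∑ k ∈ range n, poissonWeight (L ^ d) k) := by
        rw [show c * (L ^ p * h n) = L ^ p * (h n * c) by ring]
        have := h0 n
        gcongr
        linarith
    _ ≤ _ := by gcongr

theorem limsup_le (hd : d ≠ 0) (h0 : ∀ n, 0 ≤ h n) (hanti : Antitone h)
    (hF : ∀ L > 0, F L = L ^ p * ∑' k, poissonWeight (L ^ d) k * h k) :
    limsup (fun n : ℕ => ENNReal.ofReal ((n : ℝ) ^ (p / d) * h n)) atTop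
      ≤ limsup (fun L => ENNReal.ofReal (F L)) atTop := by
  refine ENNReal.limsup_le_limsup_of_forall_lt_one fun a ha => ?_
  obtain ⟨c, ⟨hc0, hc1⟩, hac⟩ := ENNReal.exists_lt_ofReal_rpow ha (p / d + 1)
  refine ⟨fun n : ℕ => (c * n) ^ (d⁻¹ : ℝ), ?_, ?_⟩
  · exact (tendsto_rpow_atTop (by positivity)).comp
      (tendsto_natCast_atTop_atTop.const_mul_atTop hc0)
  filter_upwards [eventually_mul_rpow_mul_le h0 hanti hF hc0 hc1, eventually_gt_atTop 0]
    with n hn hn0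
  have hcn : 0 < c * n := by positivity
  have hLd : ((c * n) ^ (d⁻¹ : ℝ)) ^ d = c * n := by
    rw [← rpow_natCast, ← rpow_mul hcn.le, inv_mul_cancel₀ (by exact_mod_cast hd), rpow_one]
  have hLp : ((c * n) ^ (d⁻¹ : ℝ)) ^ p = c ^ (p / d) * (n : ℝ) ^ (p / d) := by
    rw [← rpow_mul hcn.le, inv_mul_eq_div, mul_rpow hc0.le (Nat.cast_nonneg n)]
  refine ENNReal.mul_ofReal_le_ofReal hac.le (by positivity) ?_
  calc c ^ (p / d + 1) * ((n : ℝ) ^ (p / d) * h n)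
      = c * (c ^ (p / d) * (n : ℝ) ^ (p / d) * h n) := by rw [rpow_add_one hc0.ne']; ring
    _ ≤ _ := hLp ▸ hn _ (by positivity) hLd.le

theorem liminf_le (hd : d ≠ 0) (hp : 0 ≤ p) (h0 : ∀ n, 0 ≤ h n) (hanti : Antitone h)
    (hF : ∀ L > 0, F L = L ^ p * ∑' k, poissonWeight (L ^ d) k * h k) :
    liminf (fun n : ℕ => ENNReal.ofReal ((n : ℝ) ^ (p / d) * h n)) atTop
      ≤ liminf (fun L => ENNReal.ofReal (F L)) atTop := by
  refine ENNReal.liminf_le_liminf_of_forall_lt_one fun a ha => ?_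
  obtain ⟨c, ⟨hc0, hc1⟩, hac⟩ := ENNReal.exists_lt_ofReal_rpow ha (p / d + p / d + 1)
  have hn : Tendsto (fun L : ℝ => ⌈L ^ d / c⌉₊) atTop atTop :=
    tendsto_nat_ceil_atTop.comp ((tendsto_pow_atTop hd).atTop_div_const hc0)
  have hgap : ∀ᶠ n : ℕ in atTop, c * n ≤ n - 1 :=
    ((tendsto_natCast_atTop_atTop.const_mul_atTop (sub_pos.2 hc1)).eventually_ge_atTop 1).mono
      fun n hn => by linarith
  refine ⟨_, hn, ?_⟩
  filter_upwards [hn.eventually (eventually_mul_rpow_mul_le h0 hanti hF hc0 hc1),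
    hn.eventually hgap, eventually_gt_atTop 0] with L hmain hgapL hL
  set n := ⌈L ^ d / c⌉₊
  have hLn : L ^ d ≤ c * n := (div_le_iff₀' hc0).1 (Nat.le_ceil _)
  have hnL : c * (c * n) ≤ L ^ d := by
    have := Nat.ceil_lt_add_one (by positivity : 0 ≤ L ^ d / c)
    rw [← sub_lt_iff_lt_add, lt_div_iff₀' hc0] at this
    nlinarith
  have hLp : c ^ (p / d) * c ^ (p / d) * (n : ℝ) ^ (p / d) ≤ L ^ p :=
    calc c ^ (p / d) * c ^ (p / d) * (n : ℝ) ^ (p / d) = (c * (c * n)) ^ (p / d) := by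
          rw [mul_rpow hc0.le (by positivity), mul_rpow hc0.le (Nat.cast_nonneg n), mul_assoc]
      _ ≤ (L ^ d) ^ (p / d) := by gcongr
      _ = L ^ p := by
          rw [← rpow_natCast, ← rpow_mul hL.le, mul_div_cancel₀ _ (by exact_mod_cast hd)]
  refine ENNReal.mul_ofReal_le_ofReal hac.le (by positivity) ?_
  have := h0 n
  calc c ^ (p / d + p / d + 1) * ((n : ℝ) ^ (p / d) * h n)
      = c * (c ^ (p / d) * c ^ (p / d) * (n : ℝ) ^ (p / d) * h n) := by
        rw [rpow_add_one hc0.ne', rpow_add hc0]; ring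
    _ ≤ c * (L ^ p * h n) := by gcongr
    _ ≤ F L := hmain L hL hLn

end DePoissonization

theorem dePoissonization_one_sided_general (d : ℕ) (hd : 1 ≤ d) (p : ℝ) (hp : 1 ≤ p)
    (f : ℝ → ℕ → ℝ)
    (hnonneg : ∀ L > (0 : ℝ), ∀ n, 0 ≤ f L n)
    (hhom : ∀ L > (0 : ℝ), ∀ n, f L n = L ^ p * f 1 n)
    (hmono : ∀ m n : ℕ, m ≤ n → f 1 n ≤ f 1 m)
    (F : ℝ → ℝ)
    (hF : ∀ L > (0 : ℝ),
      F L = ∑' n : ℕ, ((poissonPMF (Real.toNNReal (L ^ d))) n).toReal * f L n) :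
    limsup (fun n : ℕ => ENNReal.ofReal ((n : ℝ) ^ (p / d) * f 1 n)) atTop
        ≤ limsup (fun L : ℝ => ENNReal.ofReal (F L)) atTop
      ∧ liminf (fun n : ℕ => ENNReal.ofReal ((n : ℝ) ^ (p / d) * f 1 n)) atTop
        ≤ liminf (fun L : ℝ => ENNReal.ofReal (F L)) atTop := by
  have h0 : ∀ n, 0 ≤ f 1 n := hnonneg 1 one_pos
  have hF' : ∀ L > 0, F L = L ^ p * ∑' k, poissonWeight (L ^ d) k * f 1 k := by
    intro L hL
    rw [hF L hL, ← tsum_mul_left]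
    refine tsum_congr fun k => ?_
    rw [poissonPMF_toNNReal_toReal (by positivity), hhom L hL]
    ring
  exact ⟨DePoissonization.limsup_le (by omega) h0 hmono hF',
    DePoissonization.liminf_le (by omega) (by linarith) h0 hmono hF'⟩

/-- De-Poissonization (Proposition 6.1): if `f(L,n) = L^p f(1,n)` is bounded in
`n` for `L = 1` and nonincreasing in `n`, and `F(L) = E[f(L,N_L)]` with `N_L`
Poisson of parameter `L^d`, then
`limsup_n n^{p/d} f(1,n) ≤ limsup_L F(L)` and
`liminf_n n^{p/d} f(1,n) ≤ liminf_L F(L)`. -/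
theorem dePoissonization_one_sided (d : ℕ) (hd : 1 ≤ d) (p : ℝ) (hp : 1 ≤ p)
    (f : ℝ → ℕ → ℝ) (C₀ : ℝ)
    (hnonneg : ∀ L > (0 : ℝ), ∀ n, 0 ≤ f L n)
    (hhom : ∀ L > (0 : ℝ), ∀ n, f L n = L ^ p * f 1 n)
    (hbdd : ∀ n, f 1 n ≤ C₀)
    (hmono : ∀ m n : ℕ, m ≤ n → f 1 n ≤ f 1 m)
    (F : ℝ → ℝ)
    (hF : ∀ L > (0 : ℝ),
      F L = ∑' n : ℕ, ((poissonPMF (Real.toNNReal (L ^ d))) n).toReal * f L n) :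
    limsup (fun n : ℕ => ENNReal.ofReal ((n : ℝ) ^ (p / d) * f 1 n)) atTop
        ≤ limsup (fun L : ℝ => ENNReal.ofReal (F L)) atTop
      ∧ liminf (fun n : ℕ => ENNReal.ofReal ((n : ℝ) ^ (p / d) * f 1 n)) atTop
        ≤ liminf (fun L : ℝ => ENNReal.ofReal (F L)) atTop :=
  dePoissonization_one_sided_general d hd p hp f hnonneg hhom hmono F hF
end

section
/- Let d ≥ 3, p ≥ 1, and let N_L be a Poisson random variable of parameter L^d, L ≥ 1. Suppose g : ℕ → [0, ∞) satisfies g(n) ≤ C₀ for all n (uniform boundedness) and let h(L, n) = (L^d / max(n,1)) g(n) for n ≥ 1, h(L, 0) = 0. If additionally h(L, n) ≤ C₁ L^p for all n, then E[ |h(L, N_L) − g(N_L)| ] ≤ C L^{−d/2 + p(q−1)/q} for any q > 1, where C depends on q, C₀, C₁, p, d. In particular, choosing q close to 1 (with 1 < q < 2p/(2p−d) when p > d/2), E[|h(L, N_L) − g(N_L)|] → 0 as L → ∞. -/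
/-!
For `n ≥ 1` the error is `|h(n) - g(n)| = (|n - r| / r) h(n)` with `r = L^d`. Splitting according
to whether `|N - r| / r` is below a threshold `δ` gives
`E|h(N) - g(N)| ≤ δ E[h(N)] + B δ^(1-2m) r^(-2m) E[(N - r)^(2m)]`, where `B = C₁ L^p` bounds `h`.
Here `E[h(N)] ≤ 2 C₀` because `E[r / (N + 1)] ≤ 1`, and `E[(N - r)^(2m)] ≤ e (2m)! r^m` follows from
`x^(2m) ≤ (2m)! cosh x` and the Poisson moment generating function at `±1/√r`. The threshold
`δ = L^(p/(2m) - d/2)` balances the two terms, and once `2m ≥ q/(q-1)` this exponent is at most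
`-d/2 + p(q-1)/q`.
-/

open MeasureTheory ProbabilityTheory

open Real NNReal
open scoped Nat

namespace ProbabilityTheory

set_option linter.deprecated false in
lemma tsum_poissonPMF_toReal_mul (r : ℝ≥0) (f : ℕ → ℝ) :
    ∑' n, (poissonPMF r n).toReal * f n = ∫ n, f n ∂Po(r) := by
  rw [integral_poissonMeasure]
  congr with n
  rw [← poissonPMFReal_ofReal_eq_poissonPMF, ENNReal.toReal_ofReal poissonPMFReal_nonneg,
    smul_eq_mul, poissonPMFReal]

lemma hasSum_poissonMeasure_mul_exp (r : ℝ≥0) (s : ℝ) :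
    HasSum (fun n : ℕ ↦ exp (-r) * r ^ n / n ! * exp (s * n)) (exp (r * (exp s - 1))) := by
  have h : (fun n : ℕ ↦ exp (-r) * r ^ n / n ! * exp (s * n)) =
      fun n ↦ exp (-r) * ((r * exp s) ^ n / n !) := by
    ext n
    rw [mul_pow, ← exp_nat_mul]
    ring_nf
  have := (NormedSpace.expSeries_div_hasSum_exp ((r : ℝ) * exp s)).mul_left (exp (-r))
  rw [← exp_eq_exp_ℝ, ← exp_add] at this
  rw [h, show (r : ℝ) * (exp s - 1) = -r + r * exp s by ring]
  exact this

lemma integrable_exp_mul_poissonMeasure (r : ℝ≥0) (s : ℝ) :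
    Integrable (fun n : ℕ ↦ exp (s * n)) Po(r) := by
  rw [integrable_poissonMeasure_iff]
  simpa [abs_of_pos (exp_pos _)] using (hasSum_poissonMeasure_mul_exp r s).summable

lemma mgf_poissonMeasure (r : ℝ≥0) (s : ℝ) :
    mgf (fun n : ℕ ↦ (n : ℝ)) Po(r) s = exp (r * (exp s - 1)) := by
  rw [mgf, integral_poissonMeasure]
  exact (hasSum_poissonMeasure_mul_exp r s).tsum_eq

lemma exp_mul_sub_eq (r s x : ℝ) : exp (s * (x - r)) = exp (-(s * r)) * exp (s * x) := by
  rw [← exp_add]; ring_nf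

lemma integrable_exp_mul_sub_poissonMeasure (r : ℝ≥0) (s : ℝ) :
    Integrable (fun n : ℕ ↦ exp (s * (n - r))) Po(r) := by
  simp_rw [exp_mul_sub_eq]
  exact (integrable_exp_mul_poissonMeasure r s).const_mul _

lemma integral_exp_mul_sub_poissonMeasure_le (r : ℝ≥0) {s : ℝ} (hs : |s| ≤ 1) :
    ∫ n, exp (s * (n - r)) ∂Po(r) ≤ exp (r * s ^ 2) := by
  simp_rw [exp_mul_sub_eq]
  rw [integral_const_mul, ← mgf, mgf_poissonMeasure, ← exp_add, exp_le_exp]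
  have := (abs_le.mp (abs_exp_sub_one_sub_id_le hs)).2
  nlinarith [r.coe_nonneg]

lemma pow_two_mul_le_factorial_mul_cosh (x : ℝ) (m : ℕ) : x ^ (2 * m) ≤ (2 * m)! * cosh x := by
  have := le_hasSum (hasSum_cosh x) m fun j _ ↦ by
    have := (even_two_mul j).pow_nonneg x
    positivity
  rw [div_le_iff₀ (by positivity)] at this
  linarith

lemma pow_two_mul_le_factorial_mul_pow_mul_cosh {c : ℝ} (hc : 0 < c) (y : ℝ) (m : ℕ) :
    y ^ (2 * m) ≤ (2 * m)! * c ^ m * cosh ((√c)⁻¹ * y) := by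
  have hy : y ^ (2 * m) = c ^ m * ((√c)⁻¹ * y) ^ (2 * m) := by
    have hc' : √c ^ (2 * m) = c ^ m := by rw [pow_mul, sq_sqrt hc.le]
    rw [mul_pow, inv_pow, hc']
    field_simp
  rw [hy, mul_comm _ (c ^ m), mul_assoc]
  gcongr
  exact pow_two_mul_le_factorial_mul_cosh _ m

lemma integrable_cosh_mul_sub_poissonMeasure (r : ℝ≥0) (s : ℝ) :
    Integrable (fun n : ℕ ↦ cosh (s * (n - r))) Po(r) := by
  simp_rw [cosh_eq, ← neg_mul]
  exact ((integrable_exp_mul_sub_poissonMeasure r s).add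
    (integrable_exp_mul_sub_poissonMeasure r (-s))).div_const 2

lemma integral_cosh_mul_sub_poissonMeasure_le (r : ℝ≥0) {s : ℝ} (hs : |s| ≤ 1) :
    ∫ n, cosh (s * (n - r)) ∂Po(r) ≤ exp (r * s ^ 2) := by
  simp_rw [cosh_eq, ← neg_mul]
  rw [integral_div, integral_add (integrable_exp_mul_sub_poissonMeasure r s)
    (integrable_exp_mul_sub_poissonMeasure r (-s)), div_le_iff₀ two_pos]
  have hplus := integral_exp_mul_sub_poissonMeasure_le r hs
  have hminus := integral_exp_mul_sub_poissonMeasure_le r (s := -s) (by rwa [abs_neg])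
  rw [neg_sq] at hminus
  linarith

lemma integrable_sub_pow_two_mul_poissonMeasure {r : ℝ≥0} (hr : 0 < r) (m : ℕ) :
    Integrable (fun n : ℕ ↦ ((n : ℝ) - r) ^ (2 * m)) Po(r) := by
  refine ((integrable_cosh_mul_sub_poissonMeasure r (√r)⁻¹).const_mul ((2 * m)! * r ^ m)).mono'
    (Measurable.of_discrete.aestronglyMeasurable) (ae_of_all _ fun n ↦ ?_)
  rw [Real.norm_of_nonneg ((even_two_mul m).pow_nonneg _)]
  exact pow_two_mul_le_factorial_mul_pow_mul_cosh hr _ m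

lemma integral_sub_pow_two_mul_poissonMeasure_le {r : ℝ≥0} (hr : 1 ≤ r) (m : ℕ) :
    ∫ n, ((n : ℝ) - r) ^ (2 * m) ∂Po(r) ≤ exp 1 * (2 * m)! * r ^ m := by
  have hr₀ : (0 : ℝ) < r := lt_of_lt_of_le one_pos (by exact_mod_cast hr)
  have hs : |(√(r : ℝ))⁻¹| ≤ 1 := by
    rw [abs_inv, abs_of_nonneg (sqrt_nonneg _)]
    exact inv_le_one_of_one_le₀ (one_le_sqrt.mpr (by exact_mod_cast hr))
  have hrs : (r : ℝ) * (√(r : ℝ))⁻¹ ^ 2 = 1 := by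
    rw [inv_pow, sq_sqrt hr₀.le, mul_inv_cancel₀ hr₀.ne']
  calc ∫ n, ((n : ℝ) - r) ^ (2 * m) ∂Po(r)
      ≤ ∫ n, (2 * m)! * (r : ℝ) ^ m * cosh ((√(r : ℝ))⁻¹ * (n - r)) ∂Po(r) :=
        integral_mono (integrable_sub_pow_two_mul_poissonMeasure hr₀ m)
          ((integrable_cosh_mul_sub_poissonMeasure r _).const_mul _)
          fun n ↦ pow_two_mul_le_factorial_mul_pow_mul_cosh hr₀ _ m
    _ ≤ (2 * m)! * r ^ m * exp 1 := by
        rw [integral_const_mul, ← hrs]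
        gcongr
        exact integral_cosh_mul_sub_poissonMeasure_le r hs
    _ = exp 1 * (2 * m)! * r ^ m := by ring

lemma integrable_div_succ_poissonMeasure (r : ℝ≥0) :
    Integrable (fun n : ℕ ↦ (r : ℝ) / (n + 1)) Po(r) :=
  .of_bound Measurable.of_discrete.aestronglyMeasurable r <| ae_of_all _ fun n ↦ by
    rw [Real.norm_of_nonneg (by positivity)]
    exact div_le_self r.coe_nonneg (by linarith [n.cast_nonneg (α := ℝ)])

lemma integral_div_succ_poissonMeasure (r : ℝ≥0) :
    ∫ n, (r : ℝ) / (n + 1) ∂Po(r) = 1 - exp (-r) := by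
  rw [integral_poissonMeasure]
  refine HasSum.tsum_eq ?_
  convert (hasSum_nat_add_iff' 1).mpr (hasSum_one_poissonMeasure r) using 1
  · ext n
    simp only [smul_eq_mul, Nat.factorial_succ, pow_succ, Nat.cast_mul]
    push_cast
    field_simp
  · simp

lemma abs_mul_le_add_pow_div {x δ H B : ℝ} (hδ : 0 < δ) (hH : 0 ≤ H) (hHB : H ≤ B) (k : ℕ) :
    |x| * H ≤ δ * H + |x| ^ (k + 1) / δ ^ k * B := by
  have hB : 0 ≤ B := hH.trans hHB
  rcases le_or_gt |x| δ with hx | hx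
  · have : 0 ≤ |x| ^ (k + 1) / δ ^ k * B := by positivity
    nlinarith [mul_le_mul_of_nonneg_right hx hH]
  · have hx' : |x| ≤ |x| ^ (k + 1) / δ ^ k := by
      rw [le_div_iff₀ (by positivity), pow_succ']
      gcongr
    calc |x| * H ≤ |x| ^ (k + 1) / δ ^ k * B :=
          mul_le_mul hx' hHB hH ((abs_nonneg x).trans hx')
      _ ≤ δ * H + |x| ^ (k + 1) / δ ^ k * B := le_add_of_nonneg_left (by positivity)

/-- The paper's `h(L, n) = (L^d / n) g(n)`, with `r = L^d` and `h(L, 0) = 0`. -/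
noncomputable def dePoissonized (r : ℝ) (g : ℕ → ℝ) (n : ℕ) : ℝ := if n = 0 then 0 else r / n * g n

section dePoissonized

variable {r C₀ : ℝ} {g : ℕ → ℝ}

lemma dePoissonized_nonneg (hr : 0 ≤ r) (hg : ∀ n, 0 ≤ g n) (n : ℕ) :
    0 ≤ dePoissonized r g n := by
  unfold dePoissonized
  split_ifs
  · rfl
  · exact mul_nonneg (by positivity) (hg n)

lemma dePoissonized_le (hr : 0 ≤ r) (hg : ∀ n, 0 ≤ g n ∧ g n ≤ C₀) (n : ℕ) :
    dePoissonized r g n ≤ 2 * C₀ * (r / (n + 1)) := by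
  have hC₀ : 0 ≤ C₀ := (hg 0).1.trans (hg 0).2
  unfold dePoissonized
  split_ifs with hn
  · positivity
  · have hn' : (1 : ℝ) ≤ n := by exact_mod_cast Nat.one_le_iff_ne_zero.mpr hn
    calc r / n * g n ≤ r / n * C₀ := by gcongr; exact (hg n).2
      _ ≤ 2 * C₀ * (r / (n + 1)) := by
        rw [div_mul_eq_mul_div, mul_div_assoc', div_le_div_iff₀ (by positivity) (by positivity)]
        nlinarith [mul_nonneg hr hC₀]

lemma dePoissonized_sub_eq (hr : r ≠ 0) {n : ℕ} (hn : n ≠ 0) :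
    dePoissonized r g n - g n = (r - n) / r * dePoissonized r g n := by
  have : (n : ℝ) ≠ 0 := by exact_mod_cast hn
  simp only [dePoissonized, if_neg hn]
  field_simp

lemma abs_dePoissonized_sub_le (hr : 0 < r) {δ B : ℝ} (hδ : 0 < δ)
    (hg : ∀ n, 0 ≤ g n ∧ g n ≤ C₀) (hB : ∀ n, dePoissonized r g n ≤ B) {m : ℕ} (hm : m ≠ 0)
    (n : ℕ) :
    |dePoissonized r g n - g n| ≤ C₀ * ({0} : Set ℕ).indicator 1 n + δ * (2 * C₀ * (r / (n + 1)))
      + B / (δ ^ (2 * m - 1) * r ^ (2 * m)) * ((n : ℝ) - r) ^ (2 * m) := by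
  have hC₀ : 0 ≤ C₀ := (hg 0).1.trans (hg 0).2
  have hB₀ : 0 ≤ B := by simpa [dePoissonized] using hB 0
  have hmoment : 0 ≤ B / (δ ^ (2 * m - 1) * r ^ (2 * m)) * ((n : ℝ) - r) ^ (2 * m) := by
    have := (even_two_mul m).pow_nonneg ((n : ℝ) - r)
    positivity
  rcases eq_or_ne n 0 with rfl | hn
  · simp only [dePoissonized, if_true, zero_sub, abs_neg, abs_of_nonneg (hg 0).1,
      Set.indicator_of_mem (Set.mem_singleton 0), Pi.one_apply, mul_one]
    have : 0 ≤ δ * (2 * C₀ * (r / ((0 : ℕ) + 1))) := by positivity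
    linarith [(hg 0).2]
  · have hh := dePoissonized_nonneg hr.le (fun n ↦ (hg n).1) n
    have hsplit := abs_mul_le_add_pow_div (x := (n - r) / r) hδ hh (hB n) (2 * m - 1)
    rw [Nat.sub_add_cancel (by omega), (even_two_mul m).pow_abs] at hsplit
    have hδh : δ * dePoissonized r g n ≤ δ * (2 * C₀ * (r / (n + 1))) := by
      gcongr
      exact dePoissonized_le hr.le hg n
    rw [dePoissonized_sub_eq hr.ne' hn, abs_mul, abs_of_nonneg hh, abs_div, abs_sub_comm, ← abs_div,
      Set.indicator_of_notMem (by simpa using hn), mul_zero, zero_add]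
    have : ((n - r) / r) ^ (2 * m) / δ ^ (2 * m - 1) * B
        = B / (δ ^ (2 * m - 1) * r ^ (2 * m)) * ((n : ℝ) - r) ^ (2 * m) := by
      rw [div_pow]; ring
    linarith

end dePoissonized

lemma integral_abs_dePoissonized_sub_le {r : ℝ≥0} (hr : 1 ≤ r) {g : ℕ → ℝ} {C₀ δ B : ℝ}
    (hδ : 0 < δ) (hg : ∀ n, 0 ≤ g n ∧ g n ≤ C₀) (hB : ∀ n, dePoissonized r g n ≤ B) {m : ℕ}
    (hm : m ≠ 0) :
    ∫ n, |dePoissonized r g n - g n| ∂Po(r)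
      ≤ C₀ * exp (-r) + 2 * C₀ * δ + B * exp 1 * (2 * m)! / (δ ^ (2 * m - 1) * r ^ m) := by
  have hr₀ : (0 : ℝ) < r := lt_of_lt_of_le one_pos (by exact_mod_cast hr)
  have hC₀ : 0 ≤ C₀ := (hg 0).1.trans (hg 0).2
  have hB₀ : 0 ≤ B := by simpa [dePoissonized] using hB 0
  have hind : Integrable (fun n : ℕ ↦ ({0} : Set ℕ).indicator (1 : ℕ → ℝ) n) Po(r) :=
    (integrable_const 1).indicator (measurableSet_singleton 0)
  have hsucc := (integrable_div_succ_poissonMeasure r).const_mul (2 * C₀)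
  have hmoment := integrable_sub_pow_two_mul_poissonMeasure hr₀ m
  have hfirst : Integrable (fun n : ℕ ↦ C₀ * ({0} : Set ℕ).indicator 1 n
      + δ * (2 * C₀ * (r / (n + 1)))) Po(r) :=
    (hind.const_mul _).add (hsucc.const_mul _)
  calc ∫ n, |dePoissonized r g n - g n| ∂Po(r)
      ≤ ∫ n, (C₀ * ({0} : Set ℕ).indicator 1 n + δ * (2 * C₀ * (r / (n + 1)))
          + B / (δ ^ (2 * m - 1) * r ^ (2 * m)) * ((n : ℝ) - r) ^ (2 * m)) ∂Po(r) :=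
        integral_mono_of_nonneg (ae_of_all _ fun _ ↦ abs_nonneg _)
          (hfirst.add (hmoment.const_mul _))
          (ae_of_all _ (abs_dePoissonized_sub_le hr₀ hδ hg hB hm))
    _ = C₀ * exp (-r) + δ * (2 * C₀ * (1 - exp (-r)))
          + B / (δ ^ (2 * m - 1) * r ^ (2 * m)) * ∫ n, ((n : ℝ) - r) ^ (2 * m) ∂Po(r) := by
        rw [integral_add hfirst (hmoment.const_mul _),
          integral_add (hind.const_mul _) (hsucc.const_mul _), integral_const_mul,
          integral_const_mul, integral_const_mul, integral_const_mul,
          integral_indicator_one (measurableSet_singleton 0), poissonMeasure_real_singleton,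
          integral_div_succ_poissonMeasure]
        simp
    _ ≤ C₀ * exp (-r) + δ * (2 * C₀ * 1)
          + B / (δ ^ (2 * m - 1) * r ^ (2 * m)) * (exp 1 * (2 * m)! * r ^ m) := by
        gcongr
        · linarith [exp_pos (-(r : ℝ))]
        · exact integral_sub_pow_two_mul_poissonMeasure_le hr m
    _ = C₀ * exp (-r) + 2 * C₀ * δ + B * exp 1 * (2 * m)! / (δ ^ (2 * m - 1) * r ^ m) := by
        rw [pow_mul', sq]
        field_simp

lemma integral_abs_dePoissonized_sub_le_rpow {d : ℕ} {p L C₀ C₁ : ℝ} {g : ℕ → ℝ} (hp : 0 ≤ p)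
    (hL : 1 ≤ L) (hg : ∀ n, 0 ≤ g n ∧ g n ≤ C₀)
    (hh : ∀ n, dePoissonized (L ^ d) g n ≤ C₁ * L ^ p) {m : ℕ} (hm : m ≠ 0) :
    ∫ n, |dePoissonized (L ^ d) g n - g n| ∂Po((L ^ d).toNNReal)
      ≤ (3 * C₀ + exp 1 * (2 * m)! * C₁) * L ^ (p / (2 * m) - d / 2) := by
  set β := p / (2 * m) - d / 2
  have hL₀ : 0 < L := one_pos.trans_le hL
  have hC₀ : 0 ≤ C₀ := (hg 0).1.trans (hg 0).2
  have hr : ((L ^ d).toNNReal : ℝ) = L ^ d := Real.coe_toNNReal _ (by positivity)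
  have hr₁ : 1 ≤ (L ^ d).toNNReal := by
    rw [← NNReal.coe_le_coe, hr, NNReal.coe_one]
    exact one_le_pow₀ hL
  have key := integral_abs_dePoissonized_sub_le hr₁ (rpow_pos_of_pos hL₀ β) hg
    (by rwa [hr]) hm
  rw [hr] at key
  -- `δ = L^β` balances the two error terms: `p = β + (2m - 1) β + d m`
  have hLp : L ^ p = L ^ β * (L ^ β) ^ (2 * m - 1) * (L ^ d) ^ m := by
    rw [← rpow_mul_natCast hL₀.le, ← pow_mul, ← rpow_natCast L (d * m), ← rpow_add hL₀,
      ← rpow_add hL₀]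
    congr 1
    rw [Nat.cast_sub (by omega)]
    push_cast
    simp only [β]
    field_simp
    ring
  have hexp : exp (-(L ^ d)) ≤ L ^ β := by
    calc exp (-(L ^ d)) ≤ (L ^ d)⁻¹ := by
          rw [exp_neg]
          exact inv_anti₀ (by positivity) (by linarith [add_one_le_exp (L ^ d)])
      _ = L ^ (-(d : ℝ)) := by rw [rpow_neg hL₀.le, Real.rpow_natCast]
      _ ≤ L ^ β := by
          refine rpow_le_rpow_of_exponent_le hL (show -(d : ℝ) ≤ p / (2 * m) - d / 2 from ?_)
          have : 0 ≤ p / (2 * m) := by positivity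
          linarith [(d.cast_nonneg : (0 : ℝ) ≤ d)]
  calc _ ≤ _ := key
    _ ≤ C₀ * L ^ β + 2 * C₀ * L ^ β + exp 1 * (2 * m)! * C₁ * L ^ β := by
        rw [hLp]
        gcongr
        apply le_of_eq
        field_simp
    _ = (3 * C₀ + exp 1 * (2 * m)! * C₁) * L ^ β := by ring

end ProbabilityTheory

theorem dePoissonization_error_bound_general (d : ℕ) (p : ℝ) (hp : 1 ≤ p)
    (C₀ C₁ : ℝ) (hC₀ : 0 ≤ C₀) (hC₁ : 0 ≤ C₁) (q : ℝ) (hq : 1 < q) :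
    ∃ C : ℝ, 0 < C ∧ ∀ L : ℝ, 1 ≤ L → ∀ g : ℕ → ℝ,
      (∀ n, 0 ≤ g n ∧ g n ≤ C₀) →
      (∀ n : ℕ, (if n = 0 then (0 : ℝ) else L ^ d / n * g n) ≤ C₁ * L ^ p) →
      (∑' n : ℕ, ((poissonPMF (Real.toNNReal (L ^ d))) n).toReal *
          |(if n = 0 then (0 : ℝ) else L ^ d / n * g n) - g n|)
        ≤ C * L ^ (-(d : ℝ) / 2 + p * (q - 1) / q) := by
  obtain ⟨m, hm, hqm⟩ : ∃ m : ℕ, m ≠ 0 ∧ q / (q - 1) ≤ 2 * m := by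
    refine ⟨⌈q / (q - 1)⌉₊, (Nat.ceil_pos.mpr (by bound)).ne', ?_⟩
    have := Nat.le_ceil (q / (q - 1))
    have : (0 : ℝ) ≤ ⌈q / (q - 1)⌉₊ := Nat.cast_nonneg _
    linarith
  have hexponent : p / (2 * m) - d / 2 ≤ -(d : ℝ) / 2 + p * (q - 1) / q := by
    rw [div_le_iff₀ (by linarith)] at hqm
    have : p / (2 * m) ≤ p * (q - 1) / q := by
      rw [div_le_div_iff₀ (by positivity) (by linarith)]
      nlinarith
    linarith
  refine ⟨3 * C₀ + exp 1 * (2 * m)! * C₁ + 1, by positivity, fun L hL g hg hh ↦ ?_⟩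
  rw [tsum_poissonPMF_toReal_mul]
  calc _ ≤ (3 * C₀ + exp 1 * (2 * m)! * C₁) * L ^ (p / (2 * m) - d / 2) :=
        integral_abs_dePoissonized_sub_le_rpow (by linarith) hL hg hh hm
    _ ≤ (3 * C₀ + exp 1 * (2 * m)! * C₁ + 1) * L ^ (-(d : ℝ) / 2 + p * (q - 1) / q) := by
        gcongr ?_ * ?_
        · linarith
        · exact rpow_le_rpow_of_exponent_le hL hexponent

/-- The de-Poissonization error estimate: with `N_L` Poisson of parameter
`L^d`, `g : ℕ → [0,C₀]`, `h(L,n) = (L^d/n) g(n)` for `n ≥ 1`, `h(L,0) = 0`,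
and `h(L,n) ≤ C₁ L^p`, for any `q > 1` there is a constant `C` (depending on
`q, C₀, C₁, p, d`) such that `E[|h(L,N_L) - g(N_L)|] ≤ C L^{-d/2 + p(q-1)/q}`
for `L ≥ 1`. -/
theorem dePoissonization_error_bound (d : ℕ) (hd : 3 ≤ d) (p : ℝ) (hp : 1 ≤ p)
    (C₀ C₁ : ℝ) (hC₀ : 0 ≤ C₀) (hC₁ : 0 ≤ C₁) (q : ℝ) (hq : 1 < q) :
    ∃ C : ℝ, 0 < C ∧ ∀ L : ℝ, 1 ≤ L → ∀ g : ℕ → ℝ,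
      (∀ n, 0 ≤ g n ∧ g n ≤ C₀) →
      (∀ n : ℕ, (if n = 0 then (0 : ℝ) else L ^ d / n * g n) ≤ C₁ * L ^ p) →
      (∑' n : ℕ, ((poissonPMF (Real.toNNReal (L ^ d))) n).toReal *
          |(if n = 0 then (0 : ℝ) else L ^ d / n * g n) - g n|)
        ≤ C * L ^ (-(d : ℝ) / 2 + p * (q - 1) / q) :=
  dePoissonization_error_bound_general d p hp C₀ C₁ hC₀ hC₁ q hq
end

section
/- Let λ be the counting measure on ℤ^d ∩ Q_{2L} where Q_{2L} = [0,2L]^d, write Q_{2L} as the union of 2^d cubes Q_i of side L, let ε_i ∈ {−1, +1}, and let Σ = ⋃_i ∂Q_i ∩ Q_{2L} be the union of the internal boundaries. Then the function ξ(x) = dist(x, Σ) ∑_i ε_i χ_{Q_i}(x) is 1-Lipschitz on the union of the open cubes, and for any coefficients κ_i, κ > 0 with ∑_i κ_i λ(Q_i) = κ λ(Q_{2L}), the Kantorovich duality for W_1 yields W_1(∑_i κ_i χ_{Q_i} λ, κ λ) ≥ ∑_i ∑_{X ∈ ℤ^d ∩ Q_i} dist(X, Σ) |κ_i − κ| ≥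 c L^{d+1} ∑_i |κ_i − κ| for some dimensional constant c > 0 when L is large. -/
/-!
The test function `ξ = dist(·, Σ) ∑ₛ εₛ χ_{Qₛ}` is 1-Lipschitz on all of `[0,2L]^d`: inside one
sub-cube this is the Lipschitz property of `dist(·, Σ)`; a segment joining two different
sub-cubes crosses `Σ`, where `ξ` vanishes; and the points of `[0,2L]^d` outside the half-open
sub-cubes lie on `Σ`. Integrating `ξ x - ξ y ≤ |x - y|` against a coupling gives
`W₁(μ, ν) ≥ ∫ ξ dμ - ∫ ξ dν`, which for `εₛ = sign(κₛ - κ)` is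
`∑ₛ |κₛ - κ| ∑_{X ∈ Qₛ} dist(X, Σ)`. Finally each `Qₛ` contains at least `(L/4)^d` lattice
points at distance `≥ L/4` from its faces, hence from `Σ`.
-/

open MeasureTheory ENNReal

/-- The lattice measure `∑_{X ∈ ℤ^d} δ_X` on `ℝ^d`. -/
noncomputable def latticeMeasure (d : ℕ) : Measure (EuclideanSpace ℝ (Fin d)) :=
  Measure.sum fun k : Fin d → ℤ => Measure.dirac (WithLp.toLp 2 (fun j => (k j : ℝ)) : EuclideanSpace ℝ (Fin d))

/-- The sub-cube of side `L` of `[0,2L]^d` indexed by `s : Fin d → Fin 2`. -/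
def subCube (d : ℕ) (L : ℝ) (s : Fin d → Fin 2) : Set (EuclideanSpace ℝ (Fin d)) :=
  {x | ∀ j, (s j : ℝ) * L ≤ x j ∧ x j < ((s j : ℝ) + 1) * L}

/-- The cube `[0,2L]^d`. -/
def bigCube (d : ℕ) (L : ℝ) : Set (EuclideanSpace ℝ (Fin d)) :=
  {x | ∀ j, 0 ≤ x j ∧ x j ≤ 2 * L}

/-- The union `Σ` of the internal boundaries of the `2^d` sub-cubes of `Q_{2L}`. -/
def internalBoundaries (d : ℕ) (L : ℝ) : Set (EuclideanSpace ℝ (Fin d)) :=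
  (⋃ s, frontier (subCube d L s)) ∩ bigCube d L

section Kantorovich

variable {X : Type*} [MeasurableSpace X] {μ : Measure X}

lemma ofReal_integral_le_lintegral_ofReal {f : X → ℝ} (hf : Integrable f μ) :
    ENNReal.ofReal (∫ x, f x ∂μ) ≤ ∫⁻ x, ENNReal.ofReal (f x) ∂μ := by
  rw [integral_eq_lintegral_pos_part_sub_lintegral_neg_part hf]
  exact (ENNReal.ofReal_le_ofReal (sub_le_self _ ENNReal.toReal_nonneg)).trans ofReal_toReal_le

/-- The easy half of Kantorovich–Rubinstein duality. -/
theorem ofReal_integral_sub_integral_le_Wcost_one [PseudoMetricSpace X] {ν : Measure X}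
    {f : X → ℝ} {S : Set X} (hf : LipschitzOnWith 1 f S) (hμS : ∀ᵐ x ∂μ, x ∈ S)
    (hνS : ∀ᵐ x ∂ν, x ∈ S)
    (hfμ : Integrable f μ) (hfν : Integrable f ν) :
    ENNReal.ofReal (∫ x, f x ∂μ - ∫ x, f x ∂ν) ≤ Wcost 1 μ ν := by
  refine le_sInf ?_
  rintro _ ⟨π, rfl, rfl, rfl⟩
  have hf₁ : Integrable (fun z : X × X => f z.1) π :=
    (integrable_map_measure hfμ.1 measurable_fst.aemeasurable).1 hfμ
  have hf₂ : Integrable (fun z : X × X => f z.2) π :=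
    (integrable_map_measure hfν.1 measurable_snd.aemeasurable).1 hfν
  have hle : ∀ᵐ z ∂π, f z.1 - f z.2 ≤ dist z.1 z.2 ^ (1 : ℝ) := by
    filter_upwards [ae_of_ae_map measurable_fst.aemeasurable hμS,
      ae_of_ae_map measurable_snd.aemeasurable hνS] with z h₁ h₂
    simpa [Real.dist_eq] using (le_abs_self _).trans (hf.dist_le_mul _ h₁ _ h₂)
  rw [integral_map measurable_fst.aemeasurable hfμ.1,
    integral_map measurable_snd.aemeasurable hfν.1, ← integral_sub hf₁ hf₂]
  exact (ofReal_integral_le_lintegral_ofReal (hf₁.sub hf₂)).trans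
    (lintegral_mono_ae (hle.mono fun z hz => ENNReal.ofReal_le_ofReal hz))

end Kantorovich

section LatticeMeasure

variable {d : ℕ}

def latticePoint (d : ℕ) (k : Fin d → ℤ) : EuclideanSpace ℝ (Fin d) :=
  WithLp.toLp 2 fun j => (k j : ℝ)

@[simp]
lemma latticePoint_apply (k : Fin d → ℤ) (j : Fin d) : latticePoint d k j = k j := rfl

lemma latticeMeasure_eq_sum :
    latticeMeasure d = Measure.sum fun k => Measure.dirac (latticePoint d k) := rfl

lemma latticeMeasure_restrict_eq_sum {S : Set (EuclideanSpace ℝ (Fin d))}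
    (hS : (latticePoint d ⁻¹' S).Finite) :
    (latticeMeasure d).restrict S = ∑ k ∈ hS.toFinset, Measure.dirac (latticePoint d k) := by
  classical
  rw [latticeMeasure_eq_sum, Measure.restrict_sum_of_countable]
  ext A hA
  rw [Measure.sum_apply _ hA, Measure.finsetSum_apply,
    tsum_eq_sum (s := hS.toFinset) fun k hk => ?_]
  · refine Finset.sum_congr rfl fun k hk => ?_
    rw [restrict_dirac, if_pos (Set.mem_preimage.1 (hS.mem_toFinset.1 hk))]
  · rw [restrict_dirac, if_neg (by simpa using hk), Measure.coe_zero, Pi.zero_apply]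

lemma integrable_latticeMeasure_restrict {S : Set (EuclideanSpace ℝ (Fin d))}
    (hS : (latticePoint d ⁻¹' S).Finite) (f : EuclideanSpace ℝ (Fin d) → ℝ) :
    Integrable f ((latticeMeasure d).restrict S) := by
  rw [latticeMeasure_restrict_eq_sum hS]
  exact integrable_finsetSum_measure.2 fun k _ => integrable_dirac enorm_lt_top

lemma setIntegral_latticeMeasure {S : Set (EuclideanSpace ℝ (Fin d))}
    (hS : (latticePoint d ⁻¹' S).Finite) (f : EuclideanSpace ℝ (Fin d) → ℝ) :
    ∫ x in S, f x ∂latticeMeasure d = ∑ k ∈ hS.toFinset, f (latticePoint d k) := by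
  rw [latticeMeasure_restrict_eq_sum hS,
    integral_finsetSum_measure fun k _ => integrable_dirac enorm_lt_top]
  exact Finset.sum_congr rfl fun k _ => integral_dirac f _

end LatticeMeasure

section Grid

variable {d : ℕ} {L : ℝ}

lemma subCube_eq_preimage (s : Fin d → Fin 2) :
    subCube d L s = PiLp.homeomorph 2 (fun _ : Fin d => ℝ) ⁻¹'
      Set.univ.pi fun j => Set.Ico ((s j : ℝ) * L) (((s j : ℝ) + 1) * L) := by
  ext x
  simp [subCube, PiLp.homeomorph]

lemma closure_subCube (hL : 0 < L) (s : Fin d → Fin 2) :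
    closure (subCube d L s) = {x | ∀ j, (s j : ℝ) * L ≤ x j ∧ x j ≤ ((s j : ℝ) + 1) * L} := by
  rw [subCube_eq_preimage, ← Homeomorph.preimage_closure, closure_pi_set]
  ext x
  refine Set.mem_univ_pi.trans (forall_congr' fun j => ?_)
  rw [closure_Ico (mul_lt_mul_of_pos_right (lt_add_one _) hL).ne]
  rfl

lemma interior_subCube (s : Fin d → Fin 2) :
    interior (subCube d L s) = {x | ∀ j, (s j : ℝ) * L < x j ∧ x j < ((s j : ℝ) + 1) * L} := by
  rw [subCube_eq_preimage, ← Homeomorph.preimage_interior, interior_pi_set Set.finite_univ]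
  ext x
  simp [PiLp.homeomorph]

lemma measurableSet_subCube (s : Fin d → Fin 2) : MeasurableSet (subCube d L s) := by
  rw [subCube_eq_preimage]
  exact (PiLp.homeomorph 2 _).continuous.measurable
    (MeasurableSet.univ_pi fun _ => measurableSet_Ico)

lemma subCube_subset_bigCube (s : Fin d → Fin 2) :
    subCube d L s ⊆ bigCube d L := by
  intro x hx j
  have := hx j
  obtain h | h : s j = 0 ∨ s j = 1 := by omega
  all_goals simp only [h] at this; norm_num at this; constructor <;> linarith

lemma disjoint_subCube {s t : Fin d → Fin 2} (hst : s ≠ t) :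
    Disjoint (subCube d L s) (subCube d L t) := by
  refine Set.disjoint_left.2 fun x hxs hxt => ?_
  obtain ⟨j, hj⟩ := Function.ne_iff.1 hst
  have := hxs j
  have := hxt j
  obtain ⟨hs, ht⟩ | ⟨hs, ht⟩ : s j = 0 ∧ t j = 1 ∨ s j = 1 ∧ t j = 0 := by omega
  all_goals simp only [hs, ht] at *; norm_num at *; linarith

lemma measurableSet_bigCube : MeasurableSet (bigCube d L) := by
  have : bigCube d L = PiLp.homeomorph 2 (fun _ : Fin d => ℝ) ⁻¹'
      Set.univ.pi fun _ => Set.Icc 0 (2 * L) := by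
    ext x
    simp only [bigCube, Set.mem_ofPred_eq, Set.mem_preimage, Set.mem_univ_pi, Set.mem_Icc]
    rfl
  rw [this]
  exact (PiLp.homeomorph 2 _).continuous.measurable
    (MeasurableSet.univ_pi fun _ => measurableSet_Icc)

lemma finite_latticePoint_preimage_bigCube : (latticePoint d ⁻¹' bigCube d L).Finite := by
  refine (Set.finite_Icc (0 : Fin d → ℤ) fun _ => ⌈2 * L⌉).subset fun k hk =>
    ⟨fun j => ?_, fun j => ?_⟩
  · exact Int.cast_nonneg_iff.1 (hk j).1
  · exact Int.cast_le.1 ((hk j).2.trans (Int.le_ceil _))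

lemma convex_bigCube : Convex ℝ (bigCube d L) := by
  intro x hx y hy a b ha hb hab j
  have := hx j
  have := hy j
  simp only [PiLp.add_apply, PiLp.smul_apply, smul_eq_mul]
  constructor <;> nlinarith

end Grid

section InternalBoundaries

variable {d : ℕ} {L : ℝ}

/-- The sub-cube whose closure contains `x`, choosing the lower one on the hyperplanes
`x j = L`. -/
noncomputable def cubeIndex (L : ℝ) (x : EuclideanSpace ℝ (Fin d)) : Fin d → Fin 2 :=
  fun j => if x j ≤ L then 0 else 1

lemma mem_closure_subCube_cubeIndex (hL : 0 < L) {x : EuclideanSpace ℝ (Fin d)}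
    (hx : x ∈ bigCube d L) : x ∈ closure (subCube d L (cubeIndex L x)) := by
  rw [closure_subCube hL]
  intro j
  have := hx j
  by_cases h : x j ≤ L <;> simp only [cubeIndex, h, if_true, if_false] <;> norm_num <;>
    constructor <;> linarith

lemma mem_internalBoundaries_of_notMem_subCube_cubeIndex (hL : 0 < L)
    {x : EuclideanSpace ℝ (Fin d)} (hx : x ∈ bigCube d L) (h : x ∉ subCube d L (cubeIndex L x)) :
    x ∈ internalBoundaries d L :=
  ⟨Set.mem_iUnion.2 ⟨_, mem_closure_subCube_cubeIndex hL hx, fun hi => h (interior_subset hi)⟩, hx⟩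

lemma mem_internalBoundaries_of_apply_eq (hL : 0 < L) {x : EuclideanSpace ℝ (Fin d)}
    (hx : x ∈ bigCube d L) {j : Fin d} (hj : x j = L) : x ∈ internalBoundaries d L :=
  mem_internalBoundaries_of_notMem_subCube_cubeIndex hL hx fun h => by
    simpa [cubeIndex, hj] using (h j).2

lemma internalBoundaries_nonempty (hd : 0 < d) (hL : 0 < L) :
    (internalBoundaries d L).Nonempty :=
  ⟨WithLp.toLp 2 fun _ => L,
    mem_internalBoundaries_of_apply_eq hL (fun _ => ⟨hL.le, by simp; linarith⟩) (j := ⟨0, hd⟩) rfl⟩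

lemma disjoint_interior_subCube_internalBoundaries (s : Fin d → Fin 2) :
    Disjoint (interior (subCube d L s)) (internalBoundaries d L) := by
  refine Disjoint.inter_right _ (Set.disjoint_iUnion_right.2 fun t => ?_)
  obtain rfl | hst := eq_or_ne s t
  · exact disjoint_interior_frontier
  · exact ((disjoint_subCube hst).mono_left interior_subset).closure_right isOpen_interior
      |>.mono_right frontier_subset_closure

lemma le_infDist_internalBoundaries (hd : 0 < d) (hL : 0 < L) {s : Fin d → Fin 2} {r : ℝ}
    {x : EuclideanSpace ℝ (Fin d)}
    (hx : ∀ j, (s j : ℝ) * L + r ≤ x j ∧ x j + r ≤ ((s j : ℝ) + 1) * L) :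
    r ≤ Metric.infDist x (internalBoundaries d L) := by
  refine (Metric.le_infDist (internalBoundaries_nonempty hd hL)).2 fun y hy => ?_
  by_contra! hxy
  refine (disjoint_interior_subCube_internalBoundaries s).ne_of_mem ?_ hy rfl
  rw [interior_subCube]
  intro j
  have hj := (PiLp.dist_apply_le x y j).trans_lt hxy
  rw [Real.dist_eq, abs_lt] at hj
  have := hx j
  constructor <;> linarith

end InternalBoundaries

lemma infDist_add_infDist_le_dist_of_mem_segment {E : Type*} [SeminormedAddCommGroup E]
    [NormedSpace ℝ E] {s : Set E} {x y z : E} (hz : z ∈ segment ℝ x y) (hzs : z ∈ s) :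
    Metric.infDist x s + Metric.infDist y s ≤ dist x y := by
  rw [← dist_add_dist_of_mem_segment hz, dist_comm z y]
  exact add_le_add (Metric.infDist_le_dist_of_mem hzs) (Metric.infDist_le_dist_of_mem hzs)

lemma exists_mem_segment_apply_eq {ι : Type*} [Fintype ι] {x y : EuclideanSpace ℝ ι} {j : ι}
    {c : ℝ} (hc : c ∈ Set.uIcc (x j) (y j)) : ∃ z ∈ segment ℝ x y, z j = c := by
  rw [← segment_eq_uIcc] at hc
  have := image_segment ℝ
    (EuclideanSpace.proj j : EuclideanSpace ℝ ι →L[ℝ] ℝ).toLinearMap.toAffineMap x y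
  simp only [LinearMap.coe_toAffineMap, ContinuousLinearMap.coe_coe] at this
  obtain ⟨z, hz, rfl⟩ := this ▸ hc
  exact ⟨z, hz, rfl⟩

section TestFunction

variable {d : ℕ} {L : ℝ} {ε : (Fin d → Fin 2) → ℝ}

noncomputable def testFunction (d : ℕ) (L : ℝ) (ε : (Fin d → Fin 2) → ℝ)
    (x : EuclideanSpace ℝ (Fin d)) : ℝ :=
  Metric.infDist x (internalBoundaries d L) *
    ∑ s : Fin d → Fin 2, ε s * Set.indicator (subCube d L s) (fun _ => (1 : ℝ)) x

lemma testFunction_of_mem_subCube {s : Fin d → Fin 2} {x : EuclideanSpace ℝ (Fin d)}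
    (hx : x ∈ subCube d L s) :
    testFunction d L ε x = ε s * Metric.infDist x (internalBoundaries d L) := by
  rw [testFunction, Finset.sum_eq_single s, Set.indicator_of_mem hx, mul_one, mul_comm]
  · intro t _ hts
    rw [Set.indicator_of_notMem ((disjoint_subCube hts).notMem_of_mem_right hx), mul_zero]
  · exact fun h => (h (Finset.mem_univ s)).elim

lemma testFunction_of_mem_bigCube (hL : 0 < L) {x : EuclideanSpace ℝ (Fin d)}
    (hx : x ∈ bigCube d L) :
    testFunction d L ε x = ε (cubeIndex L x) * Metric.infDist x (internalBoundaries d L) := by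
  by_cases h : x ∈ subCube d L (cubeIndex L x)
  · exact testFunction_of_mem_subCube h
  · have := Metric.infDist_zero_of_mem
      (mem_internalBoundaries_of_notMem_subCube_cubeIndex hL hx h)
    rw [testFunction, this, zero_mul, mul_zero]

/-- Two points of `[0,2L]^d` on either side of a hyperplane `x j = L` are joined by a segment
crossing `Σ`. -/
lemma infDist_add_infDist_le_dist (hL : 0 < L) {x y : EuclideanSpace ℝ (Fin d)}
    (hx : x ∈ bigCube d L) (hy : y ∈ bigCube d L) {j : Fin d} (hxj : x j ≤ L) (hyj : L ≤ y j) :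
    Metric.infDist x (internalBoundaries d L) + Metric.infDist y (internalBoundaries d L) ≤
      dist x y := by
  obtain ⟨z, hz, hzj⟩ := exists_mem_segment_apply_eq (Set.mem_uIcc.2 (Or.inl ⟨hxj, hyj⟩))
  exact infDist_add_infDist_le_dist_of_mem_segment hz
    (mem_internalBoundaries_of_apply_eq hL (convex_bigCube.segment_subset hx hy hz) hzj)

theorem lipschitzOnWith_testFunction (hL : 0 < L) (hε : ∀ s, |ε s| = 1) :
    LipschitzOnWith 1 (testFunction d L ε) (bigCube d L) := by
  refine LipschitzOnWith.of_dist_le_mul fun x hx y hy => ?_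
  rw [Real.dist_eq, testFunction_of_mem_bigCube hL hx, testFunction_of_mem_bigCube hL hy,
    NNReal.coe_one, one_mul]
  by_cases hxy : cubeIndex L x = cubeIndex L y
  · rw [hxy, ← mul_sub, abs_mul, hε, one_mul]
    simpa [Real.dist_eq] using
      (Metric.lipschitz_infDist_pt (internalBoundaries d L)).dist_le_mul x y
  · obtain ⟨j, hj⟩ := Function.ne_iff.1 hxy
    refine (abs_sub _ _).trans ?_
    simp only [abs_mul, hε, one_mul, abs_of_nonneg Metric.infDist_nonneg]
    by_cases hxj : x j ≤ L <;> by_cases hyj : y j ≤ L <;> simp [cubeIndex, hxj, hyj] at hj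
    · exact infDist_add_infDist_le_dist hL hx hy hxj (not_le.1 hyj).le
    · rw [add_comm, dist_comm]
      exact infDist_add_infDist_le_dist hL hy hx hyj (not_le.1 hxj).le

end TestFunction

section Duality

variable {d : ℕ} {L : ℝ}

lemma setIntegral_testFunction_subCube (ε : (Fin d → Fin 2) → ℝ)
    (μ : Measure (EuclideanSpace ℝ (Fin d))) (s : Fin d → Fin 2) :
    ∫ x in subCube d L s, testFunction d L ε x ∂μ =
      ε s * ∫ x in subCube d L s, Metric.infDist x (internalBoundaries d L) ∂μ := by
  rw [setIntegral_congr_fun (measurableSet_subCube s) fun x hx => testFunction_of_mem_subCube hx,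
    integral_const_mul]

lemma setIntegral_testFunction_bigCube (ε : (Fin d → Fin 2) → ℝ)
    {μ : Measure (EuclideanSpace ℝ (Fin d))}
    (h : IntegrableOn (Metric.infDist · (internalBoundaries d L)) (bigCube d L) μ) :
    ∫ x in bigCube d L, testFunction d L ε x ∂μ =
      ∑ s, ε s * ∫ x in subCube d L s, Metric.infDist x (internalBoundaries d L) ∂μ := by
  have : testFunction d L ε = fun x => ∑ s, ε s *
      (subCube d L s).indicator (Metric.infDist · (internalBoundaries d L)) x := by
    ext x
    simp only [testFunction, Finset.mul_sum]
    refine Finset.sum_congr rfl fun s _ => ?_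
    by_cases hx : x ∈ subCube d L s <;> simp [hx, mul_comm]
  rw [this, integral_finsetSum _ fun s _ => (h.indicator (measurableSet_subCube s)).const_mul _]
  refine Finset.sum_congr rfl fun s _ => ?_
  rw [integral_const_mul, integral_indicator (measurableSet_subCube s),
    Measure.restrict_restrict (measurableSet_subCube s),
    Set.inter_eq_left.2 (subCube_subset_bigCube s)]

theorem ofReal_sum_mul_abs_sub_le_Wcost (hL : 0 < L) {κi : (Fin d → Fin 2) → ℝ} {κ : ℝ}
    (hκi : ∀ s, 0 ≤ κi s) (hκ : 0 ≤ κ) :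
    ENNReal.ofReal (∑ s, (∫ x in subCube d L s, Metric.infDist x (internalBoundaries d L)
        ∂latticeMeasure d) * |κi s - κ|) ≤
      Wcost 1 (∑ s, ENNReal.ofReal (κi s) • (latticeMeasure d).restrict (subCube d L s))
        (ENNReal.ofReal κ • (latticeMeasure d).restrict (bigCube d L)) := by
  set μ := ∑ s, ENNReal.ofReal (κi s) • (latticeMeasure d).restrict (subCube d L s)
  set ν := ENNReal.ofReal κ • (latticeMeasure d).restrict (bigCube d L)
  set I := fun s => ∫ x in subCube d L s, Metric.infDist x (internalBoundaries d L)
    ∂latticeMeasure d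
  -- `ε s` is the sign of `κi s - κ`: then `∫ ξ dμ - ∫ ξ dν` collects `|κi s - κ| * I s`.
  set ε : (Fin d → Fin 2) → ℝ := fun s => if κ ≤ κi s then 1 else -1
  have hε : ∀ s, |ε s| = 1 := fun s => by by_cases h : κ ≤ κi s <;> simp [ε, h]
  have hεκ : ∀ s, ε s * (κi s - κ) = |κi s - κ| := fun s => by
    by_cases h : κ ≤ κi s
    · simp [ε, h, abs_of_nonneg (sub_nonneg.2 h)]
    · simp [ε, h, abs_of_neg (sub_neg.2 (not_le.1 h))]
  have hfinB : (latticePoint d ⁻¹' bigCube d L).Finite := finite_latticePoint_preimage_bigCube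
  have hfin (s : Fin d → Fin 2) : (latticePoint d ⁻¹' subCube d L s).Finite :=
    hfinB.subset (Set.preimage_mono (subCube_subset_bigCube s))
  have hμ : ∫ x, testFunction d L ε x ∂μ = ∑ s, κi s * (ε s * I s) := by
    rw [integral_finsetSum_measure fun s _ =>
      (integrable_latticeMeasure_restrict (hfin s) _).smul_measure ENNReal.ofReal_ne_top]
    refine Finset.sum_congr rfl fun s _ => ?_
    rw [integral_smul_measure, setIntegral_testFunction_subCube, ENNReal.toReal_ofReal (hκi s),
      smul_eq_mul]
  have hν : ∫ x, testFunction d L ε x ∂ν = κ * ∑ s, ε s * I s := by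
    rw [integral_smul_measure,
      setIntegral_testFunction_bigCube ε (integrable_latticeMeasure_restrict hfinB _),
      ENNReal.toReal_ofReal hκ, smul_eq_mul]
  have hI : ∑ s, I s * |κi s - κ| =
      ∫ x, testFunction d L ε x ∂μ - ∫ x, testFunction d L ε x ∂ν := by
    rw [hμ, hν, Finset.mul_sum, ← Finset.sum_sub_distrib]
    exact Finset.sum_congr rfl fun s _ => by rw [← hεκ]; ring
  rw [hI]
  refine ofReal_integral_sub_integral_le_Wcost_one (lipschitzOnWith_testFunction hL hε) ?_ ?_
    (integrable_finsetSum_measure.2 fun s _ =>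
      (integrable_latticeMeasure_restrict (hfin s) _).smul_measure ENNReal.ofReal_ne_top)
    ((integrable_latticeMeasure_restrict hfinB _).smul_measure ENNReal.ofReal_ne_top)
  · refine ae_finsetSum_measure_iff.2 fun s _ => Measure.ae_smul_measure ?_ _
    exact (ae_restrict_mem (measurableSet_subCube s)).mono fun x hx => subCube_subset_bigCube s hx
  · exact Measure.ae_smul_measure (ae_restrict_mem measurableSet_bigCube) _

end Duality

lemma exists_finset_int_mem_box_card_ge {ι : Type*} [Fintype ι] [DecidableEq ι]
    (c : ι → ℝ) {ℓ : ℝ} (hℓ : 1 ≤ ℓ) :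
    ∃ G : Finset (ι → ℤ), ℓ ^ Fintype.card ι ≤ G.card ∧
      ∀ k ∈ G, ∀ j, c j ≤ k j ∧ (k j : ℝ) ≤ c j + 2 * ℓ := by
  refine ⟨Finset.Icc (fun j => ⌈c j⌉) (fun j => ⌈c j⌉ + ⌊ℓ⌋), ?_, fun k hk j => ?_⟩
  · have hcard (j : ι) : (Finset.Icc ⌈c j⌉ (⌈c j⌉ + ⌊ℓ⌋)).card = (⌊ℓ⌋ + 1).toNat := by
      rw [Int.card_Icc]
      congr 1
      ring
    have hℓ' : ℓ ≤ ((⌊ℓ⌋ + 1).toNat : ℝ) := by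
      have : ((⌊ℓ⌋ + 1).toNat : ℝ) = ⌊ℓ⌋ + 1 := by
        exact_mod_cast Int.toNat_of_nonneg (by linarith [Int.floor_nonneg.2 (by linarith : 0 ≤ ℓ)])
      exact this ▸ (Int.lt_floor_add_one ℓ).le
    rw [Pi.card_Icc, Finset.prod_congr rfl fun j _ => hcard j, Finset.prod_const,
      Finset.card_univ, Nat.cast_pow]
    exact pow_le_pow_left₀ (by linarith) hℓ' _
  · obtain ⟨h₁, h₂⟩ := Finset.mem_Icc.1 hk
    have h₁ : (⌈c j⌉ : ℝ) ≤ k j := by exact_mod_cast h₁ j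
    have h₂ : (k j : ℝ) ≤ ⌈c j⌉ + ⌊ℓ⌋ := by exact_mod_cast h₂ j
    have := Int.ceil_lt_add_one (c j)
    have := Int.floor_le ℓ
    constructor <;> linarith [Int.le_ceil (c j)]

section LowerBound

variable {d : ℕ} {L : ℝ}

lemma le_setIntegral_infDist_subCube (hd : 0 < d) (hL : 4 ≤ L) (s : Fin d → Fin 2) :
    (L / 4) ^ (d + 1) ≤
      ∫ x in subCube d L s, Metric.infDist x (internalBoundaries d L) ∂latticeMeasure d := by
  have hL0 : 0 < L := by linarith
  obtain ⟨G, hcard, hG⟩ :=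
    exists_finset_int_mem_box_card_ge (fun j => (s j : ℝ) * L + L / 4) (ℓ := L / 4)
      (by linarith)
  rw [Fintype.card_fin] at hcard
  have hcentral (k) (hk : k ∈ G) (j) : (s j : ℝ) * L + L / 4 ≤ latticePoint d k j ∧
      latticePoint d k j + L / 4 ≤ ((s j : ℝ) + 1) * L := by
    rw [latticePoint_apply]
    have := hG k hk j
    exact ⟨this.1, by linarith [this.2]⟩
  have hfin : (latticePoint d ⁻¹' subCube d L s).Finite :=
    finite_latticePoint_preimage_bigCube.subset (Set.preimage_mono (subCube_subset_bigCube s))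
  have hGsub : G ⊆ hfin.toFinset := fun k hk => hfin.mem_toFinset.2 fun j =>
    ⟨by linarith [(hcentral k hk j).1], by linarith [(hcentral k hk j).2]⟩
  rw [setIntegral_latticeMeasure hfin]
  calc (L / 4) ^ (d + 1) = (L / 4) ^ d * (L / 4) := pow_succ _ _
    _ ≤ G.card * (L / 4) := by gcongr
    _ = ∑ k ∈ G, L / 4 := by rw [Finset.sum_const, nsmul_eq_mul]
    _ ≤ ∑ k ∈ G, Metric.infDist (latticePoint d k) (internalBoundaries d L) :=
      Finset.sum_le_sum fun k hk => le_infDist_internalBoundaries hd hL0 (hcentral k hk)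
    _ ≤ ∑ k ∈ hfin.toFinset, Metric.infDist (latticePoint d k) (internalBoundaries d L) :=
      Finset.sum_le_sum_of_subset_of_nonneg hGsub fun _ _ _ => Metric.infDist_nonneg

end LowerBound

/-- Step 1 of Proposition 5.3: the test function `ξ(x) = dist(x,Σ) ∑ εᵢ χ_{Qᵢ}(x)`
with `εᵢ = ±1` is 1-Lipschitz on the union of the open cubes, and by
Kantorovich–Rubinstein duality,
`W₁(∑ κᵢ χ_{Qᵢ} λ, κ λ) ≥ ∑ᵢ (∑_{X ∈ ℤ^d ∩ Qᵢ} dist(X,Σ)) |κᵢ - κ|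
  ≥ c L^{d+1} ∑ᵢ |κᵢ - κ|` for `L` large. -/
theorem grid_duality_lower_bound (d : ℕ) (hd : 1 ≤ d) :
    ∃ c : ℝ, 0 < c ∧ ∃ L0 : ℝ, ∀ L : ℝ, L0 ≤ L →
      ((∀ ε : (Fin d → Fin 2) → ℝ, (∀ s, ε s = 1 ∨ ε s = -1) →
        LipschitzOnWith 1
          (fun x => Metric.infDist x (internalBoundaries d L) *
            ∑ s : Fin d → Fin 2, ε s * Set.indicator (subCube d L s) (fun _ => (1 : ℝ)) x)
          (⋃ s, interior (subCube d L s)))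
      ∧ ∀ (κi : (Fin d → Fin 2) → ℝ) (κ : ℝ), (∀ s, 0 < κi s) → 0 < κ →
        (∑ s : Fin d → Fin 2, κi s * (latticeMeasure d (subCube d L s)).toReal
          = κ * (latticeMeasure d (bigCube d L)).toReal) →
        Wcost 1
            (∑ s : Fin d → Fin 2,
              ENNReal.ofReal (κi s) • (latticeMeasure d).restrict (subCube d L s))
            (ENNReal.ofReal κ • (latticeMeasure d).restrict (bigCube d L))
          ≥ ENNReal.ofReal (∑ s : Fin d → Fin 2,
              (∫ x in subCube d L s, Metric.infDist x (internalBoundaries d L)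
                ∂(latticeMeasure d)) * |κi s - κ|)
        ∧ (∑ s : Fin d → Fin 2,
              (∫ x in subCube d L s, Metric.infDist x (internalBoundaries d L)
                ∂(latticeMeasure d)) * |κi s - κ|)
            ≥ c * L ^ (d + 1) * ∑ s : Fin d → Fin 2, |κi s - κ|) := by
  refine ⟨(1 / 4) ^ (d + 1), by positivity, 4, fun L hL => ?_⟩
  have hL0 : 0 < L := by linarith
  refine ⟨fun ε hε => ?_, fun κi κ hκi hκ _ => ⟨?_, ?_⟩⟩
  · exact (lipschitzOnWith_testFunction hL0 fun s => (abs_eq zero_le_one).2 (hε s)).mono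
      (Set.iUnion_subset fun s => interior_subset.trans (subCube_subset_bigCube s))
  · exact ofReal_sum_mul_abs_sub_le_Wcost hL0 (fun s => (hκi s).le) hκ.le
  · rw [ge_iff_le, Finset.mul_sum]
    refine Finset.sum_le_sum fun s _ => mul_le_mul_of_nonneg_right ?_ (abs_nonneg _)
    calc (1 / 4) ^ (d + 1) * L ^ (d + 1) = (L / 4) ^ (d + 1) := by rw [← mul_pow]; ring_nf
      _ ≤ _ := le_setIntegral_infDist_subCube hd hL s
end
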